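/- arXiv:1703.07810 — 11 statements merged into one kernel-verified Lean document; each statement's English description precedes it below -/
import Mathlib

section
/- Let g : ℝⁿ → ℝᵐ satisfy g(0) = 0, let g be differentiable on the closed ball B = {x : ‖x‖ ≤ ρ} with derivative L-Lipschitz on B in the operator norm (‖g'(x) − g'(x')‖ ≤ L‖x − x'‖ for x, x' ∈ B), and suppose there is μ > 0 with ‖g'(x)ᵀh‖ ≥ μ‖h‖ for all x ∈ B and all h ∈ ℝᵐ. If ‖y‖ < μρ, then there exists x* with g(x*) = y and ‖x*‖ ≤ ‖y‖/μ. -/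
/-!
For `0 < ε < μ`, minimise `x ↦ ‖g x - y‖ + ε * ‖x‖` over the compact ball. Comparing with `x = 0`
puts a minimiser `x₀` at norm `≤ ‖y‖ / ε < ρ`, so it is an interior local minimum. If `g x₀ ≠ y`,
the one-sided derivative in the direction `-g'(x₀)ᵀ (g x₀ - y)` gives
`‖g'(x₀)ᵀ (g x₀ - y)‖ ≤ ε * ‖g x₀ - y‖`, contradicting the lower bound with constant `μ > ε`.
A solution of least norm in the ball therefore has norm `≤ ‖y‖ / ε` for every such `ε`, and
letting `ε → μ` gives the bound `‖y‖ / μ`.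
-/

open Metric Set Filter Topology ContinuousLinearMap
open scoped RealInnerProductSpace

theorem IsLocalMinOn.hasDerivWithinAt_Ici_nonneg {f : ℝ → ℝ} {f' a : ℝ}
    (h : IsLocalMinOn f (Ici a) a) (hf : HasDerivWithinAt f f' (Ici a) a) : 0 ≤ f' := by
  have hcone : (1 : ℝ) ∈ posTangentConeAt (Ici a) a :=
    one_mem_posTangentConeAt_iff_frequently.mpr
      (eventually_nhdsWithin_of_forall (s := Ioi a) fun _ hx ↦ mem_Ici.mpr (le_of_lt hx)).frequently
  simpa using h.hasFDerivWithinAt_nonneg hf.hasFDerivWithinAt hcone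

section

variable {E F : Type*} [NormedAddCommGroup E] [NormedAddCommGroup F] [InnerProductSpace ℝ F]

theorem HasDerivAt.norm {w : ℝ → F} {w' : F} {t : ℝ} (hw : HasDerivAt w w' t) (h0 : w t ≠ 0) :
    HasDerivAt (‖w ·‖) (⟪w t, w'⟫ / ‖w t‖) t := by
  have hnorm : 0 < ‖w t‖ := norm_pos_iff.mpr h0
  convert hw.norm_sq.sqrt (pow_pos hnorm 2).ne' using 1
  · simp only [Real.sqrt_sq (norm_nonneg _)]
  · rw [Real.sqrt_sq hnorm.le]
    field_simp

theorem neg_inner_le_of_isLocalMin_norm_sub_add [NormedSpace ℝ E] {g : E → F} {A : E →L[ℝ] F}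
    {x₀ : E} {y : F} {ε : ℝ} (hε : 0 ≤ ε) (hg : HasFDerivAt g A x₀) (hne : g x₀ ≠ y)
    (hmin : IsLocalMin (fun x ↦ ‖g x - y‖ + ε * ‖x‖) x₀) (v : E) :
    -⟪g x₀ - y, A v⟫ ≤ ε * ‖v‖ * ‖g x₀ - y‖ := by
  have ha : 0 < ‖g x₀ - y‖ := norm_pos_iff.mpr (sub_ne_zero.mpr hne)
  have hline : HasDerivAt (fun t : ℝ ↦ x₀ + t • v) v 0 := by
    simpa using ((hasDerivAt_id (0 : ℝ)).smul_const v).const_add x₀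
  have hres :
      HasDerivAt (fun t : ℝ ↦ ‖g (x₀ + t • v) - y‖) (⟪g x₀ - y, A v⟫ / ‖g x₀ - y‖) 0 := by
    simpa using ((hg.comp_hasDerivAt_of_eq 0 hline (by simp)).sub_const y).norm
      (by simpa using ha.ne')
  -- `ε * ‖x₀ + t • v‖` need not be differentiable at `t = 0`; its majorant `ε * (‖x₀‖ + t * ‖v‖)`
  -- is, and agrees with it at `t = 0`.
  have hmaj : IsLocalMinOn (fun t : ℝ ↦ ‖g (x₀ + t • v) - y‖ + ε * (‖x₀‖ + t * ‖v‖)) (Ici 0) 0 := by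
    have hcont : Tendsto (fun t : ℝ ↦ x₀ + t • v) (𝓝 0) (𝓝 x₀) := by
      simpa using hline.continuousAt.tendsto
    filter_upwards [nhdsWithin_le_nhds (hcont.eventually hmin), self_mem_nhdsWithin]
      with t ht (ht0 : 0 ≤ t)
    have hnorm : ‖x₀ + t • v‖ ≤ ‖x₀‖ + t * ‖v‖ := by
      simpa [norm_smul, abs_of_nonneg ht0] using norm_add_le x₀ (t • v)
    simp only [zero_smul, add_zero, zero_mul] at ht ⊢
    linarith [mul_le_mul_of_nonneg_left hnorm hε]
  have hder := hmaj.hasDerivWithinAt_Ici_nonneg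
    (hres.add ((((hasDerivAt_id 0).mul_const ‖v‖).const_add ‖x₀‖).const_mul ε)).hasDerivWithinAt
  have hder' := mul_nonneg hder ha.le
  rw [add_mul, div_mul_cancel₀ _ ha.ne'] at hder'
  linarith

theorem norm_adjoint_le_of_isLocalMin_norm_sub_add [InnerProductSpace ℝ E] [CompleteSpace E]
    [CompleteSpace F] {g : E → F} {A : E →L[ℝ] F} {x₀ : E} {y : F} {ε : ℝ} (hε : 0 ≤ ε)
    (hg : HasFDerivAt g A x₀) (hne : g x₀ ≠ y)
    (hmin : IsLocalMin (fun x ↦ ‖g x - y‖ + ε * ‖x‖) x₀) :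
    ‖adjoint A (g x₀ - y)‖ ≤ ε * ‖g x₀ - y‖ := by
  set w := adjoint A (g x₀ - y)
  have h := neg_inner_le_of_isLocalMin_norm_sub_add hε hg hne hmin (-w)
  rw [map_neg, inner_neg_right, neg_neg, ← adjoint_inner_left, real_inner_self_eq_norm_sq,
    norm_neg] at h
  rcases (norm_nonneg w).eq_or_lt with hw | hw
  · rw [← hw]
    positivity
  · nlinarith

theorem exists_eq_norm_le_div_of_lt [InnerProductSpace ℝ E] [FiniteDimensional ℝ E]
    [CompleteSpace F] {g : E → F} {g' : E → E →L[ℝ] F} {ρ ε μ : ℝ} (hε : 0 < ε) (hεμ : ε < μ)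
    (hg0 : g 0 = 0)
    (hdiff : ∀ x ∈ closedBall (0 : E) ρ, HasFDerivWithinAt g (g' x) (closedBall 0 ρ) x)
    (hμ : ∀ x ∈ closedBall (0 : E) ρ, ∀ h : F, μ * ‖h‖ ≤ ‖adjoint (g' x) h‖)
    {y : F} (hy : ‖y‖ < ε * ρ) :
    ∃ x ∈ closedBall (0 : E) ρ, g x = y ∧ ‖x‖ ≤ ‖y‖ / ε := by
  have h0B : (0 : E) ∈ closedBall 0 ρ :=
    mem_closedBall_self (nonneg_of_mul_nonneg_right ((norm_nonneg y).trans_lt hy).le hε)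
  have hcont : ContinuousOn (fun x ↦ ‖g x - y‖ + ε * ‖x‖) (closedBall 0 ρ) :=
    ((ContinuousOn.sub (fun x hx ↦ (hdiff x hx).continuousWithinAt) continuousOn_const).norm).add
      (continuous_const.mul continuous_norm).continuousOn
  obtain ⟨x₀, hx₀B, hmin⟩ := (isCompact_closedBall (0 : E) ρ).exists_isMinOn ⟨0, h0B⟩ hcont
  have hx₀ : ‖x₀‖ ≤ ‖y‖ / ε := by
    have : ‖g x₀ - y‖ + ε * ‖x₀‖ ≤ ‖g 0 - y‖ + ε * ‖(0 : E)‖ := hmin h0B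
    simp only [hg0, zero_sub, norm_neg, norm_zero, mul_zero, add_zero] at this
    rw [le_div_iff₀ hε]
    linarith [norm_nonneg (g x₀ - y)]
  refine ⟨x₀, hx₀B, ?_, hx₀⟩
  have hB : closedBall (0 : E) ρ ∈ 𝓝 x₀ := by
    refine closedBall_mem_nhds_of_mem (mem_ball_zero_iff.mpr (hx₀.trans_lt ?_))
    rwa [div_lt_iff₀ hε, mul_comm]
  by_contra hne
  have hadj := norm_adjoint_le_of_isLocalMin_norm_sub_add hε.le ((hdiff x₀ hx₀B).hasFDerivAt hB)
    hne (hmin.isLocalMin hB)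
  have hpos : 0 < ‖g x₀ - y‖ := norm_pos_iff.mpr (sub_ne_zero.mpr hne)
  nlinarith [hμ x₀ hx₀B (g x₀ - y)]

end

theorem stmt1_general {n m : ℕ} (ρ L μ : ℝ) (hρ : 0 < ρ) (hμ : 0 < μ)
    (g : EuclideanSpace ℝ (Fin n) → EuclideanSpace ℝ (Fin m))
    (g' : EuclideanSpace ℝ (Fin n) →
      (EuclideanSpace ℝ (Fin n) →L[ℝ] EuclideanSpace ℝ (Fin m)))
    (hg0 : g 0 = 0)
    (hdiff : ∀ x ∈ Metric.closedBall (0 : EuclideanSpace ℝ (Fin n)) ρ,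
      HasFDerivWithinAt g (g' x) (Metric.closedBall 0 ρ) x)
    (hμB : ∀ x ∈ Metric.closedBall (0 : EuclideanSpace ℝ (Fin n)) ρ,
      ∀ h : EuclideanSpace ℝ (Fin m),
        μ * ‖h‖ ≤ ‖ContinuousLinearMap.adjoint (g' x) h‖)
    (y : EuclideanSpace ℝ (Fin m)) (hy : ‖y‖ < μ * ρ) :
    ∃ x : EuclideanSpace ℝ (Fin n), g x = y ∧ ‖x‖ ≤ ‖y‖ / μ := by
  have hsol : ∀ ε ∈ Ioo (‖y‖ / ρ) μ, ∃ x ∈ closedBall 0 ρ, g x = y ∧ ‖x‖ ≤ ‖y‖ / ε :=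
    fun ε ⟨hyε, hεμ⟩ ↦ exists_eq_norm_le_div_of_lt
      ((div_nonneg (norm_nonneg y) hρ.le).trans_lt hyε) hεμ hg0 hdiff hμB
      ((div_lt_iff₀ hρ).mp hyε)
  have hyμ : ‖y‖ / ρ < μ := (div_lt_iff₀ hρ).mpr hy
  set S := closedBall (0 : EuclideanSpace ℝ (Fin n)) ρ ∩ g ⁻¹' {y}
  have hgc : ContinuousOn g (closedBall 0 ρ) := fun x hx ↦ (hdiff x hx).continuousWithinAt
  have hS : IsCompact S := (isCompact_closedBall _ _).of_isClosed_subset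
    (hgc.preimage_isClosed_of_isClosed isClosed_closedBall isClosed_singleton) inter_subset_left
  obtain ⟨ε, hε⟩ := exists_between hyμ
  obtain ⟨x, hxB, hgx, -⟩ := hsol ε hε
  obtain ⟨xmin, ⟨-, hgxmin⟩, hmin⟩ := hS.exists_isMinOn ⟨x, hxB, hgx⟩ continuous_norm.continuousOn
  have hlim : Tendsto (fun ε ↦ ‖y‖ / ε) (𝓝[<] μ) (𝓝 (‖y‖ / μ)) :=
    (tendsto_const_nhds.div tendsto_id hμ.ne').mono_left nhdsWithin_le_nhds
  refine ⟨xmin, hgxmin, ge_of_tendsto hlim ?_⟩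
  filter_upwards [Ioo_mem_nhdsLT hyμ] with ε hε
  obtain ⟨x, hxB, hgx, hx⟩ := hsol ε hε
  exact (hmin ⟨hxB, hgx⟩).trans hx

/-- solvability of an underdetermined equation `g x = y` on a ball. -/
theorem stmt1 {n m : ℕ} (ρ L μ : ℝ) (hρ : 0 < ρ) (hL : 0 < L) (hμ : 0 < μ)
    (g : EuclideanSpace ℝ (Fin n) → EuclideanSpace ℝ (Fin m))
    (g' : EuclideanSpace ℝ (Fin n) →
      (EuclideanSpace ℝ (Fin n) →L[ℝ] EuclideanSpace ℝ (Fin m)))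
    (hg0 : g 0 = 0)
    (hdiff : ∀ x ∈ Metric.closedBall (0 : EuclideanSpace ℝ (Fin n)) ρ,
      HasFDerivWithinAt g (g' x) (Metric.closedBall 0 ρ) x)
    (hLip : ∀ x ∈ Metric.closedBall (0 : EuclideanSpace ℝ (Fin n)) ρ,
      ∀ x' ∈ Metric.closedBall (0 : EuclideanSpace ℝ (Fin n)) ρ,
        ‖g' x - g' x'‖ ≤ L * ‖x - x'‖)
    (hμB : ∀ x ∈ Metric.closedBall (0 : EuclideanSpace ℝ (Fin n)) ρ,
      ∀ h : EuclideanSpace ℝ (Fin m),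
        μ * ‖h‖ ≤ ‖ContinuousLinearMap.adjoint (g' x) h‖)
    (y : EuclideanSpace ℝ (Fin m)) (hy : ‖y‖ < μ * ρ) :
    ∃ x : EuclideanSpace ℝ (Fin n), g x = y ∧ ‖x‖ ≤ ‖y‖ / μ :=
  stmt1_general ρ L μ hρ hμ g g' hg0 hdiff hμB y hy
end

section
/- Let g : ℝⁿ → ℝᵐ satisfy g(0) = 0, let g be differentiable on all of ℝⁿ with derivative L-Lipschitz in the operator norm (‖g'(x) − g'(x')‖ ≤ L‖x − x'‖ for all x, x'), and suppose there is μ > 0 with ‖g'(x)ᵀh‖ ≥ μ‖h‖ for all x ∈ ℝⁿ and all h ∈ ℝᵐ. Then for every y ∈ ℝᵐ there exists x* with g(x*) = y and ‖x*‖ ≤ ‖y‖/μ; in particular g is surjective. -/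
open ContinuousLinearMap

local notation "⟪" x ", " y "⟫" => @inner ℝ _ _ x y

/-- Taylor bound for a function with Lipschitz derivative. -/
lemma taylor_aux {E F : Type*} [NormedAddCommGroup E] [InnerProductSpace ℝ E]
    [NormedAddCommGroup F] [InnerProductSpace ℝ F]
    (L : ℝ) (hL : 0 ≤ L) (g : E → F) (g' : E → (E →L[ℝ] F))
    (hdiff : ∀ x, HasFDerivAt g (g' x) x)
    (hLip : ∀ x x', ‖g' x - g' x'‖ ≤ L * ‖x - x'‖)
    (x h : E) : ‖g (x + h) - g x - g' x h‖ ≤ L * ‖h‖ ^ 2 := by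
  have hconv : Convex ℝ (Metric.closedBall x ‖h‖) := convex_closedBall _ _
  have key := hconv.norm_image_sub_le_of_norm_hasFDerivWithin_le
    (f := fun z => g z - g' x z) (f' := fun z => g' z - g' x) (C := L * ‖h‖)
    (fun z hz => ((hdiff z).sub ((g' x).hasFDerivAt)).hasFDerivWithinAt)
    (fun z hz => by
      calc ‖g' z - g' x‖ ≤ L * ‖z - x‖ := hLip z x
        _ ≤ L * ‖h‖ := by
          have : ‖z - x‖ ≤ ‖h‖ := by simpa [dist_eq_norm] using hz
          exact mul_le_mul_of_nonneg_left this hL)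
    (Metric.mem_closedBall_self (norm_nonneg h))
    (by simpa [dist_eq_norm] using Metric.mem_closedBall_self (norm_nonneg h) : x + h ∈ Metric.closedBall x ‖h‖)
  have : ‖g (x + h) - g' x (x + h) - (g x - g' x x)‖ ≤ L * ‖h‖ * ‖x + h - x‖ := key
  have hxh : ‖x + h - x‖ = ‖h‖ := by simp
  calc ‖g (x + h) - g x - g' x h‖
      = ‖g (x + h) - g' x (x + h) - (g x - g' x x)‖ := by
        rw [map_add]; congr 1; abel
    _ ≤ L * ‖h‖ * ‖h‖ := by rw [hxh] at this; exact this
    _ = L * ‖h‖ ^ 2 := by ring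

set_option maxHeartbeats 2000000 in
/-- For every `ε < μ`, there is a solution with `ε * ‖x‖ ≤ ‖y‖`. -/
lemma solve_aux {E F : Type*} [NormedAddCommGroup E] [InnerProductSpace ℝ E]
    [NormedAddCommGroup F] [InnerProductSpace ℝ F]
    [FiniteDimensional ℝ E] [CompleteSpace F]
    (L μ ε : ℝ) (hL : 0 < L) (hμ : 0 < μ) (hε : 0 < ε) (hεμ : ε < μ)
    (g : E → F) (g' : E → (E →L[ℝ] F)) (hg0 : g 0 = 0)
    (hdiff : ∀ x, HasFDerivAt g (g' x) x)
    (hLip : ∀ x x', ‖g' x - g' x'‖ ≤ L * ‖x - x'‖)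
    (hμB : ∀ x, ∀ h : F, μ * ‖h‖ ≤ ‖ContinuousLinearMap.adjoint (g' x) h‖)
    (y : F) : ∃ x : E, g x = y ∧ ε * ‖x‖ ≤ ‖y‖ := by
  have hgc : Continuous g := by
    apply continuous_iff_continuousAt.2
    exact fun x => (hdiff x).continuousAt
  -- the penalized functional
  set Φ : E → ℝ := fun x => ‖g x - y‖ + ε * ‖x‖ with hΦ
  have hΦc : Continuous Φ := ((hgc.sub continuous_const).norm).add
    (continuous_const.mul continuous_norm)
  have hcoer : Filter.Tendsto Φ (Filter.cocompact E) Filter.atTop := by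
    have h1 : Filter.Tendsto (fun x : E => ε * ‖x‖) (Filter.cocompact E) Filter.atTop :=
      (tendsto_norm_cocompact_atTop).const_mul_atTop hε
    exact Filter.tendsto_atTop_mono (fun x => by
      have := norm_nonneg (g x - y); simp only [hΦ]; linarith) h1
  obtain ⟨x₀, hmin⟩ := hΦc.exists_forall_le hcoer
  have hsol : g x₀ = y := by
    by_contra hne
    set r : F := g x₀ - y with hr
    have hr0 : r ≠ 0 := sub_ne_zero.2 hne
    have hrn : 0 < ‖r‖ := norm_pos_iff.2 hr0
    set v : E := ContinuousLinearMap.adjoint (g' x₀) r with hv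
    have hvμ : μ * ‖r‖ ≤ ‖v‖ := hμB x₀ r
    have hvn : 0 < ‖v‖ := lt_of_lt_of_le (by positivity) hvμ
    set u : E := -(‖v‖⁻¹ • v) with hu
    have hun : ‖u‖ = 1 := by
      simp [hu, norm_smul, abs_of_nonneg (inv_nonneg.2 hvn.le), inv_mul_cancel₀ hvn.ne']
    -- inner product of g' x₀ u with r
    have hinner : ⟪(g' x₀) u, r⟫ = -‖v‖ := by
      have h1 : ⟪(g' x₀) u, r⟫ = ⟪u, v⟫ := by
        rw [hv, real_inner_comm, ← ContinuousLinearMap.adjoint_inner_left]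
        exact real_inner_comm _ _
      rw [h1, hu, inner_neg_left, real_inner_smul_left, real_inner_self_eq_norm_sq]
      field_simp
    set M : ℝ := ‖g' x₀‖ with hM
    set C : ℝ := M ^ 2 / (2 * ‖r‖) + L with hC
    have hCpos : 0 < C := by positivity
    -- key descent estimate for all t > 0
    have hdesc : ∀ t : ℝ, 0 < t → ‖g (x₀ + t • u) - y‖ ≤ ‖r‖ - t * μ + C * t ^ 2 := by
      intro t ht
      have htay := taylor_aux L hL.le g g' hdiff hLip x₀ (t • u)
      have htn : ‖t • u‖ = t := by
        rw [norm_smul, hun, Real.norm_eq_abs, abs_of_pos ht, mul_one]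
      have hlin : ‖r + t • ((g' x₀) u)‖ ^ 2 ≤ ‖r‖ ^ 2 - 2 * t * μ * ‖r‖ + t ^ 2 * M ^ 2 := by
        have hexp : ‖r + t • ((g' x₀) u)‖ ^ 2
            = ‖r‖ ^ 2 + 2 * (t * ⟪(g' x₀) u, r⟫) + t ^ 2 * ‖(g' x₀) u‖ ^ 2 := by
          rw [norm_add_sq_real, real_inner_smul_right, norm_smul, real_inner_comm,
            Real.norm_eq_abs, abs_of_pos ht]
          ring
        rw [hexp, hinner]
        have hgu : ‖(g' x₀) u‖ ≤ M := by
          calc ‖(g' x₀) u‖ ≤ M * ‖u‖ := (g' x₀).le_opNorm u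
            _ = M := by rw [hun, mul_one]
        have hgu2 : ‖(g' x₀) u‖ ^ 2 ≤ M ^ 2 := by nlinarith [norm_nonneg ((g' x₀) u)]
        nlinarith [hvμ]
      -- sqrt bound via AM-GM
      have hsqrt : ‖r + t • ((g' x₀) u)‖ ≤ ‖r‖ - t * μ + M ^ 2 / (2 * ‖r‖) * t ^ 2 := by
        have ham : ‖r + t • ((g' x₀) u)‖ ≤ (‖r + t • ((g' x₀) u)‖ ^ 2 + ‖r‖ ^ 2) / (2 * ‖r‖) := by
          rw [le_div_iff₀ (by positivity : (0:ℝ) < 2 * ‖r‖)]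
          nlinarith [sq_nonneg (‖r + t • ((g' x₀) u)‖ - ‖r‖)]
        refine ham.trans ?_
        rw [div_le_iff₀ (by positivity : (0:ℝ) < 2 * ‖r‖)]
        have hfs : (‖r‖ - t * μ + M ^ 2 / (2 * ‖r‖) * t ^ 2) * (2 * ‖r‖)
            = 2 * ‖r‖ ^ 2 - 2 * t * μ * ‖r‖ + M ^ 2 * t ^ 2 := by field_simp
        rw [hfs]; nlinarith [hlin]
      have hsplit : g (x₀ + t • u) - y
          = (r + t • ((g' x₀) u)) + (g (x₀ + t • u) - g x₀ - (g' x₀) (t • u)) := by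
        rw [hr, map_smul]; abel
      calc ‖g (x₀ + t • u) - y‖
          ≤ ‖r + t • ((g' x₀) u)‖ + ‖g (x₀ + t • u) - g x₀ - (g' x₀) (t • u)‖ := by
            rw [hsplit]; exact norm_add_le _ _
        _ ≤ (‖r‖ - t * μ + M ^ 2 / (2 * ‖r‖) * t ^ 2) + L * t ^ 2 := by
            refine add_le_add hsqrt ?_
            rw [htn] at htay; exact htay
        _ = ‖r‖ - t * μ + C * t ^ 2 := by rw [hC]; ring
    -- contradiction with minimality
    have hεμ' : 0 < μ - ε := sub_pos.2 hεμ
    set t : ℝ := (μ - ε) / (2 * C) with htdef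
    have ht : 0 < t := by positivity
    have hnx : ‖x₀ + t • u‖ ≤ ‖x₀‖ + t := by
      calc ‖x₀ + t • u‖ ≤ ‖x₀‖ + ‖t • u‖ := norm_add_le _ _
        _ = ‖x₀‖ + t := by
            rw [norm_smul, hun, Real.norm_eq_abs, abs_of_pos ht, mul_one]
    have hd := hdesc t ht
    have h1 : ‖r‖ + ε * ‖x₀‖ ≤ ‖g (x₀ + t • u) - y‖ + ε * ‖x₀ + t • u‖ := hmin (x₀ + t • u)
    have hCt : C * t = (μ - ε) / 2 := by
      rw [htdef]; field_simp
    have hCt2 : C * t ^ 2 = (μ - ε) / 2 * t := by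
      rw [pow_two, ← mul_assoc, hCt]
    rw [hCt2] at hd
    have e1 : ε * ‖x₀ + t • u‖ ≤ ε * (‖x₀‖ + t) := mul_le_mul_of_nonneg_left hnx hε.le
    have e5 : t * ε < t * μ := mul_lt_mul_of_pos_left hεμ ht
    nlinarith [hd, h1, e1, e5]
  refine ⟨x₀, hsol, ?_⟩
  have h0 : Φ x₀ ≤ Φ 0 := hmin 0
  simp only [hΦ, hg0, hsol, sub_self, norm_zero, zero_add, norm_neg, zero_sub] at h0
  linarith [h0]

/-- global solvability for every right-hand side `y`; `g` is surjective. -/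
theorem stmt2 {n m : ℕ} (L μ : ℝ) (hL : 0 < L) (hμ : 0 < μ)
    (g : EuclideanSpace ℝ (Fin n) → EuclideanSpace ℝ (Fin m))
    (g' : EuclideanSpace ℝ (Fin n) →
      (EuclideanSpace ℝ (Fin n) →L[ℝ] EuclideanSpace ℝ (Fin m)))
    (hg0 : g 0 = 0)
    (hdiff : ∀ x, HasFDerivAt g (g' x) x)
    (hLip : ∀ x x', ‖g' x - g' x'‖ ≤ L * ‖x - x'‖)
    (hμB : ∀ x, ∀ h : EuclideanSpace ℝ (Fin m),
      μ * ‖h‖ ≤ ‖ContinuousLinearMap.adjoint (g' x) h‖) :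
    (∀ y : EuclideanSpace ℝ (Fin m),
      ∃ x : EuclideanSpace ℝ (Fin n), g x = y ∧ ‖x‖ ≤ ‖y‖ / μ) ∧
    Function.Surjective g := by
  have key : ∀ y : EuclideanSpace ℝ (Fin m),
      ∃ x : EuclideanSpace ℝ (Fin n), g x = y ∧ ‖x‖ ≤ ‖y‖ / μ := by
    intro y
    by_cases hy : y = 0
    · exact ⟨0, by simp [hg0, hy], by simp [hy]⟩
    · have hy0 : 0 < ‖y‖ := norm_pos_iff.2 hy
      have hgc : Continuous g := continuous_iff_continuousAt.2 fun x => (hdiff x).continuousAt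
      obtain ⟨x₁, hx₁, hx₁n⟩ := solve_aux L μ (μ / 2) hL hμ (by positivity) (by linarith)
        g g' hg0 hdiff hLip hμB y
      set R : ℝ := ‖y‖ / (μ / 2) with hR
      set K := {x : EuclideanSpace ℝ (Fin n) | g x = y} ∩ Metric.closedBall 0 R with hK
      have hKclosed : IsClosed K :=
        (isClosed_singleton.preimage hgc).inter Metric.isClosed_closedBall
      have hKcompact : IsCompact K :=
        (isCompact_closedBall (0 : EuclideanSpace ℝ (Fin n)) R).of_isClosed_subset hKclosed
          Set.inter_subset_right
      have hKne : K.Nonempty := by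
        refine ⟨x₁, hx₁, ?_⟩
        rw [Metric.mem_closedBall, dist_zero_right, hR]
        rw [le_div_iff₀ (by positivity : (0:ℝ) < μ / 2)]
        linarith [hx₁n]
      obtain ⟨xs, hxsK, hxsmin⟩ := hKcompact.exists_isMinOn hKne continuous_norm.continuousOn
      refine ⟨xs, hxsK.1, ?_⟩
      by_contra hgt
      push_neg at hgt
      have hxpos : 0 < ‖xs‖ := lt_of_le_of_lt (by positivity) hgt
      have hlt : ‖y‖ < μ * ‖xs‖ := by
        rw [div_lt_iff₀ hμ] at hgt; linarith [hgt]
      set ε : ℝ := (‖y‖ / ‖xs‖ + μ) / 2 with hε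
      have hεq : ‖y‖ / ‖xs‖ < μ := (div_lt_iff₀ hxpos).2 (by linarith)
      have hεpos : 0 < ε := by positivity
      have hεμ : ε < μ := by rw [hε]; linarith
      have hεgt : ‖y‖ / ‖xs‖ < ε := by rw [hε]; linarith
      obtain ⟨x₂, hx₂, hx₂n⟩ := solve_aux L μ ε hL hμ hεpos hεμ g g' hg0 hdiff hLip hμB y
      have h2 : ‖x₂‖ ≤ ‖y‖ / ε := (le_div_iff₀ hεpos).2 (by linarith [hx₂n])
      have h3 : ‖y‖ / ε < ‖xs‖ := by
        rw [div_lt_iff₀ hεpos]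
        rw [div_lt_iff₀ hxpos] at hεgt
        linarith [hεgt]
      have hxsR : ‖xs‖ ≤ R := by
        have := hxsK.2
        rwa [Metric.mem_closedBall, dist_zero_right] at this
      have hmem : x₂ ∈ K := by
        refine ⟨hx₂, ?_⟩
        rw [Metric.mem_closedBall, dist_zero_right]
        linarith
      have := hxsmin hmem
      simp only [Set.mem_setOf_eq] at this
      have : ‖xs‖ ≤ ‖x₂‖ := this
      linarith
  exact ⟨key, fun y => ⟨(key y).choose, (key y).choose_spec.1⟩⟩
end

section
/- Let g : ℝⁿ → ℝⁿ satisfy g(0) = 0, let g be differentiable on the closed ball B = {x : ‖x‖ ≤ ρ} with derivative L-Lipschitz on B in the operator norm (‖g'(x) − g'(x')‖ ≤ L‖x − x'‖ for x, x' ∈ B), and suppose that for every x ∈ B the derivative g'(x) is invertible with ‖g'(x)⁻¹‖ ≤ 1/μ for some μ > 0. If ‖y‖ < μρ, then there exists x* with g(x*) = y and ‖x*‖ ≤ ‖y‖/μ. -/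
open Metric Set

set_option maxHeartbeats 1000000

/-- Key stepping lemma: with a small sacrifice `μ' < μ`, solve `g x = y` with `‖x‖ ≤ ‖y‖/μ'`. -/
lemma stmt3_key {E : Type*} [NormedAddCommGroup E] [NormedSpace ℝ E] [CompleteSpace E]
    (ρ L μ μ' : ℝ) (hρ : 0 < ρ) (hL : 0 < L) (hμ'0 : 0 < μ') (hμ'μ : μ' < μ)
    (g : E → E) (g' : E → (E →L[ℝ] E)) (hg0 : g 0 = 0)
    (hdiff : ∀ x ∈ closedBall (0 : E) ρ, HasFDerivWithinAt g (g' x) (closedBall 0 ρ) x)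
    (hLip : ∀ x ∈ closedBall (0 : E) ρ, ∀ x' ∈ closedBall (0 : E) ρ,
      ‖g' x - g' x'‖ ≤ L * ‖x - x'‖)
    (hinv : ∀ x ∈ closedBall (0 : E) ρ,
      ∃ e : E ≃L[ℝ] E, (e : E →L[ℝ] E) = g' x ∧ ‖(e.symm : E →L[ℝ] E)‖ ≤ 1 / μ)
    (y : E) (hy : ‖y‖ < μ' * ρ) :
    ∃ x : E, g x = y ∧ ‖x‖ ≤ ‖y‖ / μ' := by
  by_cases hy0 : y = 0
  · exact ⟨0, by simp [hg0, hy0], by simp [hy0]⟩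
  have hny : 0 < ‖y‖ := norm_pos_iff.2 hy0
  have hμ : 0 < μ := hμ'0.trans hμ'μ
  have hyρ : ‖y‖ / μ' < ρ := (div_lt_iff₀' hμ'0).2 hy
  obtain ⟨r, hrdef⟩ : ∃ r : ℝ, r = min ((μ - μ') / L) (ρ - ‖y‖ / μ') := ⟨_, rfl⟩
  have hr0 : 0 < r := hrdef ▸ lt_min (div_pos (by linarith) hL) (by linarith)
  have hrL : μ' ≤ μ - L * r := by
    have h : r ≤ (μ - μ') / L := hrdef ▸ min_le_left _ _
    have h2 := (le_div_iff₀ hL).1 h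
    nlinarith
  have hrρ : ‖y‖ / μ' + r ≤ ρ := by
    have h : r ≤ ρ - ‖y‖ / μ' := hrdef ▸ min_le_right _ _
    linarith
  obtain ⟨δ, hδdef⟩ : ∃ δ : ℝ, δ = μ' * r / ‖y‖ := ⟨_, rfl⟩
  have hδ0 : 0 < δ := hδdef ▸ div_pos (mul_pos hμ'0 hr0) hny
  have hδy : δ * ‖y‖ = μ' * r := by rw [hδdef]; field_simp
  -- the stepping lemma
  have step : ∀ t t' : ℝ, 0 ≤ t → t ≤ t' → t' ≤ 1 → t' - t ≤ δ →
      (∃ x, ‖x‖ ≤ t * ‖y‖ / μ' ∧ g x = t • y) →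
      ∃ x, ‖x‖ ≤ t' * ‖y‖ / μ' ∧ g x = t' • y := by
    intro t t' ht0 htt' ht'1 hstep ⟨x, hxn, hgx⟩
    rcases eq_or_lt_of_le htt' with rfl | htlt
    · exact ⟨x, hxn, hgx⟩
    obtain ⟨r', hr'def⟩ : ∃ r' : ℝ, r' = (t' - t) * ‖y‖ / μ' := ⟨_, rfl⟩
    have hr'0 : 0 < r' := hr'def ▸ div_pos (mul_pos (by linarith) hny) hμ'0
    have hr'mul : μ' * r' = (t' - t) * ‖y‖ := by rw [hr'def]; field_simp
    have hr'r : r' ≤ r := by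
      have h1 : (t' - t) * ‖y‖ ≤ δ * ‖y‖ := by nlinarith
      nlinarith
    have ht1 : t ≤ 1 := htt'.trans ht'1
    have hsum : t * ‖y‖ / μ' + r' = t' * ‖y‖ / μ' := by
      rw [hr'def]; field_simp; ring
    have ht'y : t' * ‖y‖ / μ' ≤ ‖y‖ / μ' :=
      (div_le_div_iff_of_pos_right hμ'0).2 (by nlinarith)
    have hxρ : ‖x‖ ≤ ρ := by
      have := (div_le_div_iff_of_pos_right hμ'0).2 (show t * ‖y‖ ≤ ‖y‖ by nlinarith)
      linarith [hxn]
    have hxB : x ∈ closedBall (0 : E) ρ := by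
      simpa [Metric.mem_closedBall, dist_zero_right] using hxρ
    have hsub : closedBall x r' ⊆ closedBall (0 : E) ρ := by
      intro z hz
      simp only [Metric.mem_closedBall, dist_zero_right] at hz ⊢
      rw [dist_eq_norm] at hz
      have h1 : ‖z‖ - ‖x‖ ≤ ‖z - x‖ := norm_sub_norm_le z x
      linarith [hxn, hsum, ht'y, hrρ, hr'r]
    -- approximation on the small ball
    have hA : ApproximatesLinearOn g (g' x) (closedBall x r') (L * r').toNNReal := by
      intro a ha b hb
      have hcoe : ((L * r').toNNReal : ℝ) = L * r' := Real.coe_toNNReal _ (by positivity)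
      rw [hcoe]
      refine (convex_closedBall x r').norm_image_sub_le_of_norm_hasFDerivWithin_le'
        (f' := g') (fun z hz => (hdiff z (hsub hz)).mono hsub) (fun z hz => ?_) hb ha
      have hzB := hsub hz
      have hL1 := hLip z hzB x hxB
      have hzx : ‖z - x‖ ≤ r' := by rw [← dist_eq_norm]; exact hz
      calc ‖g' z - g' x‖ ≤ L * ‖z - x‖ := hL1
        _ ≤ L * r' := mul_le_mul_of_nonneg_left hzx hL.le
    obtain ⟨e, he, hes⟩ := hinv x hxB
    rw [← he] at hA
    have hesn : 0 < ‖(e.symm : E →L[ℝ] E)‖ := by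
      rcases (norm_nonneg (e.symm : E →L[ℝ] E)).eq_or_lt with h0 | h
      · exfalso
        have hb := (e.symm : E →L[ℝ] E).le_opNorm (e y)
        rw [← h0] at hb
        simp only [zero_mul] at hb
        have hyy : ‖y‖ ≤ 0 := by
          have : (e.symm : E →L[ℝ] E) (e y) = y := e.symm_apply_apply y
          rw [this] at hb; exact hb
        linarith
      · exact h
    have hesinv : μ ≤ ‖(e.symm : E →L[ℝ] E)‖⁻¹ := by
      rw [le_inv_comm₀ hμ hesn]
      rwa [one_div] at hes
    have hS := hA.surjOn_closedBall_of_nonlinearRightInverse e.toNonlinearRightInverse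
      hr'0.le (Subset.refl _)
    have hnn : (e.toNonlinearRightInverse.nnnorm : ℝ) = ‖(e.symm : E →L[ℝ] E)‖ := by
      simp [ContinuousLinearEquiv.toNonlinearRightInverse]
    have hmem : t' • y ∈ closedBall (g x)
        (((e.toNonlinearRightInverse.nnnorm : ℝ)⁻¹ - ((L * r').toNNReal : ℝ)) * r') := by
      rw [Metric.mem_closedBall, hgx, dist_eq_norm, ← sub_smul, norm_smul,
        Real.norm_eq_abs, abs_of_pos (by linarith : (0:ℝ) < t' - t)]
      have hcoe : ((L * r').toNNReal : ℝ) = L * r' := Real.coe_toNNReal _ (by positivity)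
      rw [hnn, hcoe]
      have h4 : μ' ≤ ‖(e.symm : E →L[ℝ] E)‖⁻¹ - L * r' := by nlinarith
      rw [← hr'mul]
      exact mul_le_mul_of_nonneg_right h4 hr'0.le
    obtain ⟨x', hx'ball, hgx'⟩ := hS hmem
    refine ⟨x', ?_, hgx'⟩
    have hx'x : ‖x' - x‖ ≤ r' := by rw [← dist_eq_norm]; exact hx'ball
    have h1 : ‖x'‖ - ‖x‖ ≤ ‖x' - x‖ := norm_sub_norm_le x' x
    linarith [hxn, hsum]
  -- induction
  have ind : ∀ k : ℕ, ∃ x, ‖x‖ ≤ min 1 (k * δ) * ‖y‖ / μ' ∧ g x = (min 1 (k * δ)) • y := by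
    intro k
    induction k with
    | zero => exact ⟨0, by simp, by simp [hg0]⟩
    | succ k ih =>
      refine step (min 1 (k * δ)) (min 1 ((k + 1 : ℕ) * δ)) ?_ ?_ ?_ ?_ ih
      · exact le_min (by norm_num) (by positivity)
      · exact min_le_min le_rfl (by push_cast; nlinarith)
      · exact min_le_left _ _
      · rcases le_total 1 ((k : ℝ) * δ) with h | h
        · rw [min_eq_left h]
          have h1 : min 1 ((k + 1 : ℕ) * δ) ≤ 1 := min_le_left _ _
          linarith
        · rw [min_eq_right h]
          have h1 : min 1 ((k + 1 : ℕ) * δ) ≤ (k + 1 : ℕ) * δ := min_le_right _ _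
          push_cast at h1 ⊢
          nlinarith
  obtain ⟨k, hk⟩ := exists_nat_ge (1 / δ)
  have hk1 : 1 ≤ (k : ℝ) * δ := by
    rw [div_le_iff₀ hδ0] at hk; nlinarith
  obtain ⟨x, hx1, hx2⟩ := ind k
  rw [min_eq_left hk1] at hx1 hx2
  exact ⟨x, by simpa using hx2, by simpa using hx1⟩

/-- the `m = n` case with invertible derivative, `‖g'(x)⁻¹‖ ≤ 1/μ` on the ball. -/
theorem stmt3 {n : ℕ} (ρ L μ : ℝ) (hρ : 0 < ρ) (hL : 0 < L) (hμ : 0 < μ)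
    (g : EuclideanSpace ℝ (Fin n) → EuclideanSpace ℝ (Fin n))
    (g' : EuclideanSpace ℝ (Fin n) →
      (EuclideanSpace ℝ (Fin n) →L[ℝ] EuclideanSpace ℝ (Fin n)))
    (hg0 : g 0 = 0)
    (hdiff : ∀ x ∈ Metric.closedBall (0 : EuclideanSpace ℝ (Fin n)) ρ,
      HasFDerivWithinAt g (g' x) (Metric.closedBall 0 ρ) x)
    (hLip : ∀ x ∈ Metric.closedBall (0 : EuclideanSpace ℝ (Fin n)) ρ,
      ∀ x' ∈ Metric.closedBall (0 : EuclideanSpace ℝ (Fin n)) ρ,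
        ‖g' x - g' x'‖ ≤ L * ‖x - x'‖)
    (hinv : ∀ x ∈ Metric.closedBall (0 : EuclideanSpace ℝ (Fin n)) ρ,
      ∃ e : EuclideanSpace ℝ (Fin n) ≃L[ℝ] EuclideanSpace ℝ (Fin n),
        (e : EuclideanSpace ℝ (Fin n) →L[ℝ] EuclideanSpace ℝ (Fin n)) = g' x ∧
        ‖(e.symm : EuclideanSpace ℝ (Fin n) →L[ℝ] EuclideanSpace ℝ (Fin n))‖ ≤ 1 / μ)
    (y : EuclideanSpace ℝ (Fin n)) (hy : ‖y‖ < μ * ρ) :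
    ∃ x : EuclideanSpace ℝ (Fin n), g x = y ∧ ‖x‖ ≤ ‖y‖ / μ := by
  by_cases hy0 : y = 0
  · exact ⟨0, by simp [hg0, hy0], by simp [hy0]⟩
  have hny : 0 < ‖y‖ := norm_pos_iff.2 hy0
  have hyρμ : ‖y‖ / ρ < μ := (div_lt_iff₀ hρ).2 (by linarith [hy])
  obtain ⟨c, hcdef⟩ : ∃ c : ℝ, c = (μ - ‖y‖ / ρ) / 2 := ⟨_, rfl⟩
  have hc0 : 0 < c := hcdef ▸ by linarith
  have hcμ : c < μ := by
    have : 0 < ‖y‖ / ρ := div_pos hny hρ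
    rw [hcdef]; linarith
  -- the approximating sequence
  have key : ∀ k : ℕ, ∃ x : EuclideanSpace ℝ (Fin n), g x = y ∧ ‖x‖ ≤ ‖y‖ / (μ - c / (k + 1)) := by
    intro k
    have hk1 : (0 : ℝ) < (k : ℝ) + 1 := by positivity
    have hck : c / ((k : ℝ) + 1) ≤ c := by
      rw [div_le_iff₀ hk1]; nlinarith
    have hck0 : 0 < c / ((k : ℝ) + 1) := div_pos hc0 hk1
    have hμk0 : 0 < μ - c / (k + 1) := by linarith
    have hμkμ : μ - c / (k + 1) < μ := by linarith
    have hμky : ‖y‖ < (μ - c / (k + 1)) * ρ := by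
      have h1 : ‖y‖ / ρ < μ - c := by rw [hcdef]; linarith
      have h2 : ‖y‖ < (μ - c) * ρ := by rw [div_lt_iff₀ hρ] at h1; linarith
      nlinarith
    exact stmt3_key ρ L μ (μ - c / (k + 1)) hρ hL hμk0 hμkμ g g' hg0 hdiff hLip hinv y hμky
  choose u hgu hun using key
  -- all terms lie in the compact ball of radius ρ
  have huB : ∀ k : ℕ, u k ∈ Metric.closedBall (0 : EuclideanSpace ℝ (Fin n)) ρ := by
    intro k
    have hk1 : (0 : ℝ) < (k : ℝ) + 1 := by positivity
    have hck0 : 0 < c / ((k : ℝ) + 1) := div_pos hc0 hk1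
    have hck : c / ((k : ℝ) + 1) ≤ c := by rw [div_le_iff₀ hk1]; nlinarith
    have hμk0 : 0 < μ - c / (k + 1) := by linarith
    have h1 : ‖y‖ / ρ < μ - c := by rw [hcdef]; linarith
    have h2 : ‖y‖ < (μ - c / (k+1)) * ρ := by
      rw [div_lt_iff₀ hρ] at h1; nlinarith
    have h3 : ‖y‖ / (μ - c / (k + 1)) < ρ := (div_lt_iff₀' hμk0).2 h2
    simp only [Metric.mem_closedBall, dist_zero_right]
    linarith [hun k]
  obtain ⟨x, hxB, φ, hφ, hlim⟩ :=
    (isCompact_closedBall (0 : EuclideanSpace ℝ (Fin n)) ρ).tendsto_subseq huB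
  refine ⟨x, ?_, ?_⟩
  · -- g x = y by continuity
    have hcont : ContinuousOn g (Metric.closedBall (0 : EuclideanSpace ℝ (Fin n)) ρ) :=
      fun z hz => (hdiff z hz).continuousWithinAt
    have hlim' : Filter.Tendsto (u ∘ φ) Filter.atTop
        (nhdsWithin x (Metric.closedBall (0 : EuclideanSpace ℝ (Fin n)) ρ)) :=
      tendsto_nhdsWithin_of_tendsto_nhds_of_eventually_within _ hlim
        (Filter.Eventually.of_forall fun k => huB (φ k))
    have h2 : Filter.Tendsto (fun k => g (u (φ k))) Filter.atTop (nhds (g x)) :=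
      (hcont x hxB).tendsto.comp hlim'
    have h3 : Filter.Tendsto (fun _ : ℕ => y) Filter.atTop (nhds (g x)) :=
      h2.congr fun k => hgu (φ k)
    exact tendsto_nhds_unique h3 tendsto_const_nhds
  · -- norm bound by passing to the limit
    have hμlim : Filter.Tendsto (fun k : ℕ => μ - c / (k + 1)) Filter.atTop (nhds μ) := by
      have h0 : Filter.Tendsto (fun k : ℕ => c / ((k : ℝ) + 1)) Filter.atTop (nhds 0) := by
        apply Filter.Tendsto.div_atTop (tendsto_const_nhds)
        exact Filter.tendsto_atTop_add_const_right _ 1 tendsto_natCast_atTop_atTop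
      have := Filter.Tendsto.sub
        (tendsto_const_nhds : Filter.Tendsto (fun _ : ℕ => μ) Filter.atTop (nhds μ)) h0
      simpa using this
    have hdivlim : Filter.Tendsto (fun k : ℕ => ‖y‖ / (μ - c / (k + 1))) Filter.atTop
        (nhds (‖y‖ / μ)) := tendsto_const_nhds.div hμlim (ne_of_gt hμ)
    have hnormlim : Filter.Tendsto (fun k => ‖u (φ k)‖) Filter.atTop (nhds ‖x‖) :=
      hlim.norm
    refine le_of_tendsto_of_tendsto' hnormlim (hdivlim.comp hφ.tendsto_atTop) ?_
    intro k
    exact hun (φ k)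
end

section
/- Let g : ℝⁿ → ℝᵐ satisfy g(0) = 0, let g be differentiable on the closed ball B = {x : ‖x‖ ≤ ρ} with derivative L-Lipschitz on B in the operator norm (‖g'(x) − g'(x')‖ ≤ L‖x − x'‖ for x, x' ∈ B), and suppose there is μ₀ > 0 with ‖g'(0)ᵀh‖ ≥ μ₀‖h‖ for all h ∈ ℝᵐ. Set r* = min{ρ, μ₀/(2L)}. If ‖y‖ ≤ (μ₀ − L r*) r*, then there exists x* with g(x*) = y and ‖x*‖ ≤ r*. -/
/-!
Put `A = g'(0)`. Since `Aᵀ` is bounded below by `μ₀`, it is injective, so `A Aᵀ` is invertible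
and every `y` has the preimage `x = Aᵀ u` with `A Aᵀ u = y`; from
`‖x‖² = ⟪u, y⟫ ≤ ‖u‖ ‖y‖ ≤ μ₀⁻¹ ‖x‖ ‖y‖` this gives a right inverse of `A` of norm at most `μ₀⁻¹`.
On the ball of radius `r` the Lipschitz bound on `g'` makes `g` approximate `A` up to `L r`, and
the Newton-type surjectivity theorem behind the inverse function theorem then shows that `g` maps
this ball onto the ball of radius `(μ₀ - L r) r` around `g 0 = 0`.
-/

open Metric Set
open scoped NNReal

namespace ContinuousLinearMap

variable {𝕜 E F : Type*} [RCLike 𝕜]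
  [NormedAddCommGroup E] [InnerProductSpace 𝕜 E] [CompleteSpace E]
  [NormedAddCommGroup F] [InnerProductSpace 𝕜 F] [CompleteSpace F] [FiniteDimensional 𝕜 F]

theorem exists_apply_eq_norm_le_of_le_norm_adjoint {A : E →L[𝕜] F} {μ : ℝ} (hμ : 0 < μ)
    (hA : ∀ h, μ * ‖h‖ ≤ ‖adjoint A h‖) (y : F) : ∃ x, A x = y ∧ ‖x‖ ≤ μ⁻¹ * ‖y‖ := by
  have hAinj : Function.Injective (adjoint A) := by
    refine (injective_iff_map_eq_zero _).2 fun h hh => norm_eq_zero.1 ?_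
    have hμh := hA h
    rw [hh, norm_zero] at hμh
    exact le_antisymm (nonpos_of_mul_nonpos_right hμh hμ) (norm_nonneg h)
  have hsurj : Function.Surjective (A ∘L adjoint A) :=
    LinearMap.injective_iff_surjective (f := ((A ∘L adjoint A : F →L[𝕜] F) : F →ₗ[𝕜] F)) |>.1
      ((A.self_comp_adjoint_injective_iff).2 hAinj)
  obtain ⟨u, rfl⟩ := hsurj y
  refine ⟨adjoint A u, rfl, ?_⟩
  set x := adjoint A u
  have hx_sq : ‖x‖ ^ 2 ≤ ‖u‖ * ‖A x‖ := by
    rw [apply_norm_sq_eq_inner_adjoint_left, adjoint_adjoint]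
    exact (RCLike.re_le_norm _).trans (norm_inner_le_norm _ _) |>.trans_eq (mul_comm _ _)
  have hμx : μ * ‖x‖ ≤ ‖A x‖ := by
    rcases (norm_nonneg x).eq_or_lt with hx | hx
    · rw [← hx, mul_zero]
      exact norm_nonneg _
    · refine le_of_mul_le_mul_left ?_ hx
      calc ‖x‖ * (μ * ‖x‖) = μ * ‖x‖ ^ 2 := by ring
        _ ≤ μ * ‖u‖ * ‖A x‖ := by rw [mul_assoc]; gcongr
        _ ≤ ‖x‖ * ‖A x‖ := by gcongr; exact hA u
  rwa [inv_mul_eq_div, le_div_iff₀ hμ, mul_comm]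

theorem exists_nonlinearRightInverse_of_le_norm_adjoint {A : E →L[𝕜] F} {μ : ℝ} (hμ : 0 < μ)
    (hA : ∀ h, μ * ‖h‖ ≤ ‖adjoint A h‖) :
    ∃ A' : A.NonlinearRightInverse, (A'.nnnorm : ℝ) = μ⁻¹ := by
  choose inv hinv using exists_apply_eq_norm_le_of_le_norm_adjoint hμ hA
  exact ⟨⟨inv, ⟨μ⁻¹, by positivity⟩, fun y => (hinv y).2, fun y => (hinv y).1⟩, rfl⟩

end ContinuousLinearMap

theorem Convex.approximatesLinearOn_of_norm_hasFDerivWithinAt_sub_le {𝕜 E G : Type*}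
    [NontriviallyNormedField 𝕜] [IsRCLikeNormedField 𝕜]
    [NormedAddCommGroup E] [NormedSpace ℝ E] [NormedSpace 𝕜 E]
    [NormedAddCommGroup G] [NormedSpace 𝕜 G] {s : Set E} (hs : Convex ℝ s)
    {f : E → G} {f' : E → E →L[𝕜] G} {φ : E →L[𝕜] G} {C : ℝ≥0}
    (hf : ∀ x ∈ s, HasFDerivWithinAt f (f' x) s x) (bound : ∀ x ∈ s, ‖f' x - φ‖ ≤ C) :
    ApproximatesLinearOn f φ s C := fun _ hx _ hy =>
  hs.norm_image_sub_le_of_norm_hasFDerivWithin_le' hf bound hy hx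

theorem surjOn_closedBall_of_le_norm_adjoint_fderiv {E F : Type*}
    [NormedAddCommGroup E] [InnerProductSpace ℝ E] [CompleteSpace E]
    [NormedAddCommGroup F] [InnerProductSpace ℝ F] [CompleteSpace F] [FiniteDimensional ℝ F]
    {f : E → F} {f' : E → E →L[ℝ] F} {b : E} {r L μ : ℝ} (hr : 0 ≤ r) (hL : 0 ≤ L) (hμ : 0 < μ)
    (hf : ∀ x ∈ closedBall b r, HasFDerivWithinAt f (f' x) (closedBall b r) x)
    (hLip : ∀ x ∈ closedBall b r, ‖f' x - f' b‖ ≤ L * dist x b)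
    (hadj : ∀ h, μ * ‖h‖ ≤ ‖ContinuousLinearMap.adjoint (f' b) h‖) :
    SurjOn f (closedBall b r) (closedBall (f b) ((μ - L * r) * r)) := by
  obtain ⟨A', hA'⟩ := ContinuousLinearMap.exists_nonlinearRightInverse_of_le_norm_adjoint hμ hadj
  have happrox : ApproximatesLinearOn f (f' b) (closedBall b r) ⟨L * r, by positivity⟩ :=
    (convex_closedBall b r).approximatesLinearOn_of_norm_hasFDerivWithinAt_sub_le hf
      fun x hx => (hLip x hx).trans (mul_le_mul_of_nonneg_left (mem_closedBall.1 hx) hL)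
  have hsurj := happrox.surjOn_closedBall_of_nonlinearRightInverse A' hr subset_rfl
  rwa [hA', inv_inv] at hsurj

/-- single-point condition with `r* = min{ρ, μ₀/(2L)}`. -/
theorem stmt5 {n m : ℕ} (ρ L μ₀ : ℝ) (hρ : 0 < ρ) (hL : 0 < L) (hμ₀ : 0 < μ₀)
    (g : EuclideanSpace ℝ (Fin n) → EuclideanSpace ℝ (Fin m))
    (g' : EuclideanSpace ℝ (Fin n) →
      (EuclideanSpace ℝ (Fin n) →L[ℝ] EuclideanSpace ℝ (Fin m)))
    (hg0 : g 0 = 0)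
    (hdiff : ∀ x ∈ Metric.closedBall (0 : EuclideanSpace ℝ (Fin n)) ρ,
      HasFDerivWithinAt g (g' x) (Metric.closedBall 0 ρ) x)
    (hLip : ∀ x ∈ Metric.closedBall (0 : EuclideanSpace ℝ (Fin n)) ρ,
      ∀ x' ∈ Metric.closedBall (0 : EuclideanSpace ℝ (Fin n)) ρ,
        ‖g' x - g' x'‖ ≤ L * ‖x - x'‖)
    (hμ0 : ∀ h : EuclideanSpace ℝ (Fin m),
      μ₀ * ‖h‖ ≤ ‖ContinuousLinearMap.adjoint (g' 0) h‖)
    (y : EuclideanSpace ℝ (Fin m))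
    (hy : ‖y‖ ≤ (μ₀ - L * min ρ (μ₀ / (2 * L))) * min ρ (μ₀ / (2 * L))) :
    ∃ x : EuclideanSpace ℝ (Fin n), g x = y ∧ ‖x‖ ≤ min ρ (μ₀ / (2 * L)) := by
  set r := min ρ (μ₀ / (2 * L))
  have hr : 0 ≤ r := le_min hρ.le (by positivity)
  have hball : closedBall (0 : EuclideanSpace ℝ (Fin n)) r ⊆ closedBall 0 ρ :=
    closedBall_subset_closedBall (min_le_left _ _)
  have hsurj := surjOn_closedBall_of_le_norm_adjoint_fderiv hr hL.le hμ₀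
    (fun x hx => (hdiff x (hball hx)).mono hball)
    (fun x hx => by simpa using hLip x (hball hx) 0 (mem_closedBall_self hρ.le)) hμ0
  obtain ⟨x, hx, rfl⟩ := hsurj (by simpa [hg0] using hy)
  exact ⟨x, rfl, by simpa using hx⟩
end

section
/- Let P : ℝⁿ → ℝᵐ be differentiable on a convex set C with derivative L-Lipschitz on C in the operator norm (‖P'(x) − P'(x')‖ ≤ L‖x − x'‖ for x, x' ∈ C). Let x ∈ C, z ∈ ℝⁿ and α ∈ ℝ be such that x − αz ∈ C and P'(x) z = P(x). Then ‖P(x − αz)‖ ≤ |1 − α|·‖P(x)‖ + (L/2)·α²·‖z‖². -/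
/-!
Along the segment `t ↦ x + t • v` the remainder `P (x + t • v) - P x - t • P' x v` vanishes at
`0` and has derivative `(P' (x + t • v) - P' x) v`, of norm at most `L t ‖v‖²`; comparing with
`L t² ‖v‖² / 2` bounds the first-order Taylor remainder by `L ‖v‖² / 2`. For the damped Newton
step `v = -α • z`, the condition `P' x z = P x` turns the linear model `P x + P' x v` into
`(1 - α) • P x`, and the triangle inequality finishes.
-/

open Set

theorem norm_image_le_of_norm_derivWithin_le_mul {F : Type*} [NormedAddCommGroup F]
    [NormedSpace ℝ F] {g g' : ℝ → F} {K b : ℝ}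
    (hg : ∀ t ∈ Icc 0 b, HasDerivWithinAt g (g' t) (Icc 0 b) t) (hg0 : g 0 = 0)
    (bound : ∀ t ∈ Ico 0 b, ‖g' t‖ ≤ K * t) :
    ∀ t ∈ Icc 0 b, ‖g t‖ ≤ K / 2 * t ^ 2 := by
  have hquad : ∀ t : ℝ, HasDerivAt (fun t => K / 2 * t ^ 2) (K * t) t := fun t =>
    ((hasDerivAt_pow 2 t).const_mul (K / 2)).congr_deriv (by norm_num; ring)
  refine image_norm_le_of_norm_deriv_right_le_deriv_boundary
    (fun t ht => (hg t ht).continuousWithinAt) (fun t ht => ?_) (by simp [hg0]) hquad bound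
  exact (hg t (Ico_subset_Icc_self ht)).mono_of_mem_nhdsWithin (Icc_mem_nhdsGE_of_mem ht)

theorem Convex.norm_image_sub_sub_fderiv_le_of_lipschitz {E F : Type*}
    [NormedAddCommGroup E] [NormedSpace ℝ E] [NormedAddCommGroup F] [NormedSpace ℝ F]
    {C : Set E} (hC : Convex ℝ C) {P : E → F} {P' : E → E →L[ℝ] F} {L : ℝ}
    (hdiff : ∀ x ∈ C, HasFDerivWithinAt P (P' x) C x)
    (hLip : ∀ x ∈ C, ∀ x' ∈ C, ‖P' x - P' x'‖ ≤ L * ‖x - x'‖)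
    {x y : E} (hx : x ∈ C) (hy : y ∈ C) :
    ‖P y - P x - P' x (y - x)‖ ≤ L / 2 * ‖y - x‖ ^ 2 := by
  set v := y - x
  set c : ℝ → E := fun t => x + t • v
  have hc_mem : ∀ t ∈ Icc (0 : ℝ) 1, c t ∈ C := fun t ht =>
    hC.add_smul_sub_mem hx hy ht
  have hc : ∀ t : ℝ, HasDerivAt c v t := fun t => by
    simpa only [id, one_smul] using ((hasDerivAt_id t).smul_const v).const_add x
  set g : ℝ → F := fun t => P (c t) - P x - t • P' x v
  have hg : ∀ t ∈ Icc (0 : ℝ) 1,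
      HasDerivWithinAt g ((P' (c t) - P' x) v) (Icc 0 1) t := fun t ht => by
    have hPc := (hdiff (c t) (hc_mem t ht)).comp_hasDerivWithinAt t
      (hc t).hasDerivWithinAt hc_mem
    have hgt := (hPc.sub_const (P x)).sub ((hasDerivWithinAt_id t _).smul_const (P' x v))
    rw [one_smul] at hgt
    exact hgt
  have bound : ∀ t ∈ Ico (0 : ℝ) 1, ‖(P' (c t) - P' x) v‖ ≤ (L * ‖v‖ ^ 2) * t :=
    fun t ht => calc
      ‖(P' (c t) - P' x) v‖ ≤ ‖P' (c t) - P' x‖ * ‖v‖ := (P' (c t) - P' x).le_opNorm v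
      _ ≤ L * ‖c t - x‖ * ‖v‖ := by
        gcongr; exact hLip _ (hc_mem t (Ico_subset_Icc_self ht)) x hx
      _ = L * ‖v‖ ^ 2 * t := by
        simp only [c, add_sub_cancel_left, norm_smul, Real.norm_of_nonneg ht.1]; ring
  have hc_one : c 1 = y := by simp only [c, v, one_smul, add_sub_cancel]
  have h1 := norm_image_le_of_norm_derivWithin_le_mul hg (by simp [g, c]) bound 1
    (right_mem_Icc.2 zero_le_one)
  simp only [g, hc_one, one_smul] at h1
  linarith

theorem stmt6_general {n m : ℕ} (L : ℝ)
    (C : Set (EuclideanSpace ℝ (Fin n))) (hC : Convex ℝ C)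
    (P : EuclideanSpace ℝ (Fin n) → EuclideanSpace ℝ (Fin m))
    (P' : EuclideanSpace ℝ (Fin n) →
      (EuclideanSpace ℝ (Fin n) →L[ℝ] EuclideanSpace ℝ (Fin m)))
    (hdiff : ∀ x ∈ C, HasFDerivWithinAt P (P' x) C x)
    (hLip : ∀ x ∈ C, ∀ x' ∈ C, ‖P' x - P' x'‖ ≤ L * ‖x - x'‖)
    (x : EuclideanSpace ℝ (Fin n)) (hx : x ∈ C)
    (z : EuclideanSpace ℝ (Fin n)) (α : ℝ)
    (hxz : x - α • z ∈ C) (hz : P' x z = P x) :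
    ‖P (x - α • z)‖ ≤ |1 - α| * ‖P x‖ + L / 2 * α ^ 2 * ‖z‖ ^ 2 := by
  have htaylor := hC.norm_image_sub_sub_fderiv_le_of_lipschitz hdiff hLip hx hxz
  have hmodel : P x + P' x (x - α • z - x) = (1 - α) • P x := by
    rw [sub_sub_cancel_left, map_neg, map_smul, hz]; module
  have hstep : ‖x - α • z - x‖ ^ 2 = α ^ 2 * ‖z‖ ^ 2 := by
    rw [sub_sub_cancel_left, norm_neg, norm_smul, mul_pow, Real.norm_eq_abs, sq_abs]
  calc ‖P (x - α • z)‖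
      = ‖(P (x - α • z) - P x - P' x (x - α • z - x)) + (1 - α) • P x‖ := by
        rw [← hmodel]; congr 1; abel
    _ ≤ L / 2 * ‖x - α • z - x‖ ^ 2 + |1 - α| * ‖P x‖ := by
        grw [norm_add_le, htaylor, norm_smul, Real.norm_eq_abs]
    _ = |1 - α| * ‖P x‖ + L / 2 * α ^ 2 * ‖z‖ ^ 2 := by rw [hstep]; ring

/-- the basic one-step inequality for a damped Newton step on a convex set. -/
theorem stmt6 {n m : ℕ} (L : ℝ) (hL : 0 < L)
    (C : Set (EuclideanSpace ℝ (Fin n))) (hC : Convex ℝ C)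
    (P : EuclideanSpace ℝ (Fin n) → EuclideanSpace ℝ (Fin m))
    (P' : EuclideanSpace ℝ (Fin n) →
      (EuclideanSpace ℝ (Fin n) →L[ℝ] EuclideanSpace ℝ (Fin m)))
    (hdiff : ∀ x ∈ C, HasFDerivWithinAt P (P' x) C x)
    (hLip : ∀ x ∈ C, ∀ x' ∈ C, ‖P' x - P' x'‖ ≤ L * ‖x - x'‖)
    (x : EuclideanSpace ℝ (Fin n)) (hx : x ∈ C)
    (z : EuclideanSpace ℝ (Fin n)) (α : ℝ)
    (hxz : x - α • z ∈ C) (hz : P' x z = P x) :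
    ‖P (x - α • z)‖ ≤ |1 - α| * ‖P x‖ + L / 2 * α ^ 2 * ‖z‖ ^ 2 :=
  stmt6_general L C hC P P' hdiff hLip x hx z α hxz hz
end

section
/- Let P : ℝⁿ → ℝᵐ be differentiable on all of ℝⁿ with derivative L-Lipschitz in the operator norm (‖P'(x) − P'(x')‖ ≤ L‖x − x'‖ for all x, x'), and suppose there is μ > 0 with ‖P'(x)ᵀh‖ ≥ μ‖h‖ for all x ∈ ℝⁿ and all h ∈ ℝᵐ. Let x⁰ ∈ ℝⁿ and let the sequences (x^k), (z^k) satisfy for every k: P'(x^k) z^k = P(x^k), ‖z^k‖ ≤ ‖P(x^k)‖/μ, and x^{k+1} = x^k − α_k z^k with α_k = min{1, μ²/(L‖P(x^k)‖)} when P(x^k) ≠ 0 and α_k = 1 otherwise. Set k_max = max{0, ⌈2L‖P(x⁰)‖/μ²⌉ − 2}. Then ‖P(x^{k+1})‖ ≤ ‖P(x^k)‖ for all k, the sequence (x^k) converges to some x* with P(x*) = 0, ‖P(x^k)‖ ≤ ‖P(x⁰)‖ − (μ²/(2L))·k for all k < k_max, ‖P(x^k)‖ ≤ (2μ²/L)·2^{−2^{(k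 − k_max)}} for all k ≥ k_max, ‖x^k − x*‖ ≤ (2μ/L)·∑_{ℓ ≥ k − k_max} 2^{−2^ℓ} for all k ≥ k_max, and ‖x^k − x*‖ ≤ (μ/L)·(k_max − k + 2c) for all k < k_max, where c = ∑_{ℓ ≥ 0} (1/2)^{2^ℓ}. -/
/-!
Taylor's formula with an `L`-Lipschitz derivative shows that a Newton direction `z` at `x`
with `‖z‖ ≤ ‖P x‖ / μ` satisfies
`‖P (x - α • z)‖ ≤ (1 - α) ‖P x‖ + L / (2 μ²) (α ‖P x‖)²` for `α ∈ [0, 1]`.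
With `c = μ² / L`, the damped step therefore lowers the residual by at least `c / 2` while it
is `≥ c`, and once it is `≤ c` the step is the full Newton step, which squares the residual up
to the factor `1 / (2c)`. Hence the residual is `≤ c` after `k_max` steps and then decays like
`2c · 2^(-2^j)`. The steps have length `≤ min c ‖P x‖ / μ`, a summable sequence, so the
iterates form a Cauchy sequence whose limit is a zero of `P`.
-/

open Set Filter Topology

theorem summable_pow_two_pow {r : ℝ} (h0 : 0 ≤ r) (h1 : r < 1) :
    Summable fun i : ℕ => r ^ 2 ^ i :=
  (summable_geometric_of_lt_one h0 h1).of_nonneg_of_le (fun _ => by positivity)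
    fun i => pow_le_pow_of_le_one h0 h1.le i.lt_two_pow_self.le

/-- The paper's `k_max = max {0, ⌈2r/c⌉ - 2}`; `Int.toNat` supplies the `max` with `0`. -/
noncomputable def linearPhaseLength (r c : ℝ) : ℕ := (⌈2 * r / c⌉ - 2).toNat

theorem sub_two_le_linearPhaseLength (r c : ℝ) : 2 * r / c - 2 ≤ linearPhaseLength r c := by
  have hceil : ((⌈2 * r / c⌉ - 2 : ℤ) : ℝ) ≤ ((linearPhaseLength r c : ℤ) : ℝ) := by
    exact_mod_cast Int.self_le_toNat _
  push_cast at hceil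
  linarith [Int.le_ceil (2 * r / c)]

theorem lt_sub_two_of_lt_linearPhaseLength {r c : ℝ} {k : ℕ} (hk : k < linearPhaseLength r c) :
    (k : ℝ) < 2 * r / c - 2 := by
  have hceil : ((k : ℤ) : ℝ) + 1 ≤ ((⌈2 * r / c⌉ - 2 : ℤ) : ℝ) := by
    unfold linearPhaseLength at hk
    exact_mod_cast (by omega : (k : ℤ) + 1 ≤ ⌈2 * r / c⌉ - 2)
  push_cast at hceil
  linarith [Int.ceil_lt_add_one (2 * r / c)]

structure TwoPhaseDecrease (c : ℝ) (p : ℕ → ℝ) : Prop where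
  pos : 0 < c
  nonneg : ∀ k, 0 ≤ p k
  le_sub_of_le : ∀ k, c ≤ p k → p (k + 1) ≤ p k - c / 2
  le_sq_of_le : ∀ k, p k ≤ c → p (k + 1) ≤ p k ^ 2 / (2 * c)

namespace TwoPhaseDecrease

variable {c : ℝ} {p : ℕ → ℝ}

theorem succ_le (h : TwoPhaseDecrease c p) (k : ℕ) : p (k + 1) ≤ p k := by
  rcases le_total c (p k) with hk | hk
  · linarith [h.le_sub_of_le k hk, h.pos]
  · calc p (k + 1) ≤ p k ^ 2 / (2 * c) := h.le_sq_of_le k hk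
      _ ≤ p k := by
        rw [div_le_iff₀ (by linarith [h.pos])]
        nlinarith [h.nonneg k]

theorem antitone (h : TwoPhaseDecrease c p) : Antitone p :=
  antitone_nat_of_succ_le h.succ_le

theorem le_or_le_sub_mul (h : TwoPhaseDecrease c p) (k : ℕ) :
    p k ≤ c ∨ p k ≤ p 0 - c / 2 * k := by
  induction k with
  | zero => simp
  | succ k ih =>
    by_cases hk : p k ≤ c
    · exact .inl ((h.succ_le k).trans hk)
    · refine ih.imp (fun hc => absurd hc hk) fun hlin => ?_
      push_cast
      linarith [h.le_sub_of_le k (le_of_not_ge hk)]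

theorem le_of_linearPhaseLength_le (h : TwoPhaseDecrease c p) {k : ℕ}
    (hk : linearPhaseLength (p 0) c ≤ k) : p k ≤ c := by
  have hK : 2 * p 0 / c - 2 ≤ k :=
    (sub_two_le_linearPhaseLength _ _).trans (by exact_mod_cast hk)
  refine (h.le_or_le_sub_mul k).elim id fun hlin => hlin.trans ?_
  have : c / 2 * (2 * p 0 / c - 2) = p 0 - c := by field_simp [h.pos.ne']
  nlinarith [h.pos]

theorem le_sub_mul_of_lt_linearPhaseLength (h : TwoPhaseDecrease c p) {k : ℕ}
    (hk : k < linearPhaseLength (p 0) c) : p k ≤ p 0 - c / 2 * k := by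
  have hK := lt_sub_two_of_lt_linearPhaseLength hk
  refine (h.le_or_le_sub_mul k).elim (fun hsmall => hsmall.trans ?_) id
  have : c / 2 * (2 * p 0 / c - 2) = p 0 - c := by field_simp [h.pos.ne']
  nlinarith [h.pos]

theorem le_two_mul_half_pow_two_pow (h : TwoPhaseDecrease c p) {k₀ : ℕ} (hk₀ : p k₀ ≤ c)
    {k : ℕ} (hk : k₀ ≤ k) : p k ≤ 2 * c * (1 / 2 : ℝ) ^ 2 ^ (k - k₀) := by
  obtain ⟨i, rfl⟩ := Nat.exists_eq_add_of_le hk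
  rw [Nat.add_sub_cancel_left]
  induction i with
  | zero => norm_num; linarith
  | succ i ih =>
    have hc := h.pos
    calc p (k₀ + (i + 1)) ≤ p (k₀ + i) ^ 2 / (2 * c) :=
          h.le_sq_of_le _ ((h.antitone (Nat.le_add_right _ _)).trans hk₀)
      _ ≤ (2 * c * (1 / 2 : ℝ) ^ 2 ^ i) ^ 2 / (2 * c) := by
          gcongr
          · exact h.nonneg _
          · exact ih (Nat.le_add_right _ _)
      _ = 2 * c * (1 / 2 : ℝ) ^ 2 ^ (i + 1) := by
          rw [pow_succ 2 i, pow_mul]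
          field_simp

theorem tendsto_zero (h : TwoPhaseDecrease c p) : Tendsto p atTop (𝓝 0) := by
  set K := linearPhaseLength (p 0) c
  have hbound : Tendsto (fun i : ℕ => 2 * c * (1 / 2 : ℝ) ^ 2 ^ i) atTop (𝓝 0) :=
    ((summable_pow_two_pow (by norm_num) (by norm_num)).mul_left _).tendsto_atTop_zero
  refine (tendsto_add_atTop_iff_nat K).1 <|
    tendsto_of_tendsto_of_tendsto_of_le_of_le tendsto_const_nhds hbound
      (fun i => h.nonneg _) fun i => ?_
  have := h.le_two_mul_half_pow_two_pow (h.le_of_linearPhaseLength_le le_rfl)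
    (Nat.le_add_left K i)
  rwa [Nat.add_sub_cancel] at this

theorem exists_tendsto_dist_le {X : Type*} [MetricSpace X] [CompleteSpace X]
    (h : TwoPhaseDecrease c p) {x : ℕ → X} {μ : ℝ} (hμ : 0 < μ)
    (hx : ∀ k, dist (x k) (x (k + 1)) ≤ min c (p k) / μ) :
    ∃ xs, Tendsto x atTop (𝓝 xs) ∧
      (∀ k, linearPhaseLength (p 0) c ≤ k → dist (x k) xs ≤
        2 * c / μ * ∑' ℓ : ℕ, (1 / 2 : ℝ) ^ 2 ^ (ℓ + (k - linearPhaseLength (p 0) c))) ∧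
      ∀ k < linearPhaseLength (p 0) c, dist (x k) xs ≤
        c / μ * ((linearPhaseLength (p 0) c : ℝ) - k + 2 * ∑' ℓ : ℕ, (1 / 2 : ℝ) ^ 2 ^ ℓ) := by
  set K := linearPhaseLength (p 0) c
  set d : ℕ → ℝ := fun i => 2 * c / μ * (1 / 2 : ℝ) ^ 2 ^ i
  have hd : Summable d := (summable_pow_two_pow (by norm_num) (by norm_num)).mul_left _
  have hnear : ∀ i, dist (x (K + i)) (x (K + i + 1)) ≤ d i := by
    intro i
    have hquad := h.le_two_mul_half_pow_two_pow (h.le_of_linearPhaseLength_le le_rfl)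
      (Nat.le_add_right K i)
    rw [Nat.add_sub_cancel_left] at hquad
    calc dist (x (K + i)) (x (K + i + 1)) ≤ min c (p (K + i)) / μ := hx _
      _ ≤ 2 * c * (1 / 2 : ℝ) ^ 2 ^ i / μ := by gcongr; exact (min_le_right _ _).trans hquad
      _ = d i := by ring
  have hfar : ∀ k, dist (x k) (x (k + 1)) ≤ c / μ := fun k =>
    (hx k).trans (div_le_div_of_nonneg_right (min_le_left _ _) hμ.le)
  obtain ⟨xs, hxs⟩ := cauchySeq_tendsto_of_complete (cauchySeq_of_dist_le_of_summable d hnear hd)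
  have htail : ∀ i, dist (x (K + i)) xs ≤ 2 * c / μ * ∑' ℓ : ℕ, (1 / 2 : ℝ) ^ 2 ^ (ℓ + i) := by
    intro i
    refine (dist_le_tsum_of_dist_le_of_tendsto d hnear hd hxs i).trans_eq ?_
    rw [← tsum_mul_left]
    simp_rw [d, add_comm i]
  refine ⟨xs, (tendsto_add_atTop_iff_nat K).1 ?_, fun k hk => ?_, fun k hk => ?_⟩
  · simpa only [add_comm _ K] using hxs
  · obtain ⟨i, rfl⟩ := Nat.exists_eq_add_of_le hk
    simpa using htail i
  · calc dist (x k) xs ≤ dist (x k) (x K) + dist (x K) xs := dist_triangle _ _ _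
      _ ≤ ∑ _ ∈ Finset.Ico k K, c / μ + 2 * c / μ * ∑' ℓ : ℕ, (1 / 2 : ℝ) ^ 2 ^ ℓ :=
          add_le_add (dist_le_Ico_sum_of_dist_le hk.le fun _ _ => hfar _) (by simpa using htail 0)
      _ = c / μ * ((K : ℝ) - k + 2 * ∑' ℓ : ℕ, (1 / 2 : ℝ) ^ 2 ^ ℓ) := by
          rw [Finset.sum_const, Nat.card_Ico, nsmul_eq_mul, Nat.cast_sub hk.le]
          ring

end TwoPhaseDecrease

theorem norm_sub_sub_fderiv_le {E F : Type*} [NormedAddCommGroup E] [NormedSpace ℝ E]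
    [NormedAddCommGroup F] [NormedSpace ℝ F] {P : E → F} {P' : E → E →L[ℝ] F} {L : ℝ}
    (hdiff : ∀ x, HasFDerivAt P (P' x) x) (hLip : ∀ x x', ‖P' x - P' x'‖ ≤ L * ‖x - x'‖)
    (a v : E) : ‖P (a + v) - P a - P' a v‖ ≤ L / 2 * ‖v‖ ^ 2 := by
  set f : ℝ → F := fun t => P (a + t • v) - P a - t • P' a v
  have hf : ∀ t, HasDerivAt f (P' (a + t • v) v - P' a v) t := by
    intro t
    have hline : HasDerivAt (fun t : ℝ => a + t • v) v t := by
      simpa using ((hasDerivAt_id t).smul_const v).const_add a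
    exact (((hdiff _).comp_hasDerivAt t hline).sub_const _).sub
      (by simpa using (hasDerivAt_id t).smul_const (P' a v))
  have hB : ∀ t, HasDerivAt (fun t : ℝ => L / 2 * ‖v‖ ^ 2 * t ^ 2) (L * ‖v‖ ^ 2 * t) t := by
    intro t
    refine ((hasDerivAt_pow 2 t).const_mul (L / 2 * ‖v‖ ^ 2)).congr_deriv ?_
    push_cast
    ring
  have hbound : ∀ t ∈ Ico (0 : ℝ) 1, ‖P' (a + t • v) v - P' a v‖ ≤ L * ‖v‖ ^ 2 * t := by
    intro t ht
    calc ‖P' (a + t • v) v - P' a v‖ = ‖(P' (a + t • v) - P' a) v‖ := rfl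
      _ ≤ ‖P' (a + t • v) - P' a‖ * ‖v‖ := ContinuousLinearMap.le_opNorm _ _
      _ ≤ L * ‖t • v‖ * ‖v‖ := by
        gcongr
        simpa using hLip (a + t • v) a
      _ = L * ‖v‖ ^ 2 * t := by
        rw [norm_smul, Real.norm_of_nonneg ht.1]; ring
  have := image_norm_le_of_norm_deriv_right_le_deriv_boundary
    (fun t _ => (hf t).continuousAt.continuousWithinAt) (fun t _ => (hf t).hasDerivWithinAt)
    (by simp [f]) hB hbound (right_mem_Icc.2 zero_le_one)
  simpa [f] using this

/-- The paper's step size for the residual norm `r`; the case `r = 0` is split off because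
`μ ^ 2 / (L * 0) = 0` in Lean. -/
noncomputable def dampedStepSize (L μ r : ℝ) : ℝ :=
  if r = 0 then 1 else min 1 (μ ^ 2 / (L * r))

namespace dampedStepSize

variable {L μ r : ℝ}

theorem mem_Icc (hL : 0 ≤ L) (hr : 0 ≤ r) : dampedStepSize L μ r ∈ Icc (0 : ℝ) 1 := by
  unfold dampedStepSize
  split_ifs
  · exact right_mem_Icc.2 zero_le_one
  · exact ⟨le_min zero_le_one (by positivity), min_le_left _ _⟩

theorem mul_le (hL : 0 < L) (hr : 0 ≤ r) : dampedStepSize L μ r * r ≤ μ ^ 2 / L := by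
  unfold dampedStepSize
  split_ifs with h0
  · rw [h0, mul_zero]
    positivity
  · calc min 1 (μ ^ 2 / (L * r)) * r ≤ μ ^ 2 / (L * r) * r := by gcongr; exact min_le_right _ _
      _ = μ ^ 2 / L := by field_simp

theorem eq_one (hL : 0 < L) (hr0 : 0 ≤ r) (hr : r ≤ μ ^ 2 / L) : dampedStepSize L μ r = 1 := by
  unfold dampedStepSize
  split_ifs with h0
  · rfl
  · refine min_eq_left ?_
    rw [le_div_iff₀ (by positivity), one_mul, mul_comm]
    rwa [le_div_iff₀ hL] at hr

theorem mul_eq (hL : 0 < L) (hμ : μ ≠ 0) (hr : μ ^ 2 / L ≤ r) :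
    dampedStepSize L μ r * r = μ ^ 2 / L := by
  have hr0 : 0 < r := lt_of_lt_of_le (by positivity) hr
  rw [dampedStepSize, if_neg hr0.ne', min_eq_right]
  · field_simp
  · rw [div_le_one (by positivity)]
    rwa [div_le_iff₀ hL, mul_comm] at hr

end dampedStepSize

theorem dist_damped_newton_step_le {E F : Type*} [NormedAddCommGroup E] [NormedSpace ℝ E]
    [NormedAddCommGroup F] {P : E → F} {L μ : ℝ} {x z : E} (hL : 0 < L) (hμ : 0 < μ)
    (hzn : ‖z‖ ≤ ‖P x‖ / μ) :
    dist x (x - dampedStepSize L μ ‖P x‖ • z) ≤ min (μ ^ 2 / L) ‖P x‖ / μ := by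
  have hmem := dampedStepSize.mem_Icc (μ := μ) hL.le (norm_nonneg (P x))
  rw [dist_eq_norm, sub_sub_cancel, norm_smul, Real.norm_of_nonneg hmem.1]
  calc dampedStepSize L μ ‖P x‖ * ‖z‖ ≤ dampedStepSize L μ ‖P x‖ * (‖P x‖ / μ) := by
        gcongr
        exact hmem.1
    _ = dampedStepSize L μ ‖P x‖ * ‖P x‖ / μ := by ring
    _ ≤ min (μ ^ 2 / L) ‖P x‖ / μ := by
        gcongr
        exact le_min (dampedStepSize.mul_le hL (norm_nonneg _))
          (mul_le_of_le_one_left (norm_nonneg _) hmem.2)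

section NewtonStep

variable {E F : Type*} [NormedAddCommGroup E] [NormedSpace ℝ E] [NormedAddCommGroup F]
  [NormedSpace ℝ F] {P : E → F} {P' : E → E →L[ℝ] F} {L μ α : ℝ} {x z : E}

theorem norm_newton_step_le (hdiff : ∀ x, HasFDerivAt P (P' x) x)
    (hLip : ∀ x x', ‖P' x - P' x'‖ ≤ L * ‖x - x'‖) (hL : 0 ≤ L) (hα : α ∈ Icc (0 : ℝ) 1)
    (hz : P' x z = P x) (hzn : ‖z‖ ≤ ‖P x‖ / μ) :
    ‖P (x - α • z)‖ ≤ (1 - α) * ‖P x‖ + L / (2 * μ ^ 2) * (α * ‖P x‖) ^ 2 := by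
  have hsplit : P (x - α • z) = (1 - α) • P x + (P (x + (-α) • z) - P x - P' x ((-α) • z)) := by
    rw [map_smul, hz, neg_smul, ← sub_eq_add_neg]
    module
  calc ‖P (x - α • z)‖ ≤ ‖(1 - α) • P x‖ + L / 2 * ‖(-α) • z‖ ^ 2 := by
        rw [hsplit]
        exact (norm_add_le _ _).trans (add_le_add_right (norm_sub_sub_fderiv_le hdiff hLip _ _) _)
    _ = (1 - α) * ‖P x‖ + L / 2 * (α * ‖z‖) ^ 2 := by
        rw [norm_smul, norm_smul, norm_neg, Real.norm_of_nonneg (sub_nonneg.2 hα.2),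
          Real.norm_of_nonneg hα.1]
    _ ≤ (1 - α) * ‖P x‖ + L / 2 * (α * (‖P x‖ / μ)) ^ 2 := by
        have := hα.1
        gcongr
    _ = (1 - α) * ‖P x‖ + L / (2 * μ ^ 2) * (α * ‖P x‖) ^ 2 := by ring

theorem norm_damped_newton_step_le_sub (hdiff : ∀ x, HasFDerivAt P (P' x) x)
    (hLip : ∀ x x', ‖P' x - P' x'‖ ≤ L * ‖x - x'‖) (hL : 0 < L) (hμ : 0 < μ)
    (hz : P' x z = P x) (hzn : ‖z‖ ≤ ‖P x‖ / μ) (hlarge : μ ^ 2 / L ≤ ‖P x‖) :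
    ‖P (x - dampedStepSize L μ ‖P x‖ • z)‖ ≤ ‖P x‖ - μ ^ 2 / L / 2 := by
  have hstep := dampedStepSize.mul_eq hL hμ.ne' hlarge
  calc _ ≤ _ := norm_newton_step_le hdiff hLip hL.le
        (dampedStepSize.mem_Icc hL.le (norm_nonneg _)) hz hzn
    _ = ‖P x‖ - μ ^ 2 / L / 2 := by
        rw [sub_mul, one_mul, hstep]
        field_simp
        ring

theorem norm_damped_newton_step_le_sq (hdiff : ∀ x, HasFDerivAt P (P' x) x)
    (hLip : ∀ x x', ‖P' x - P' x'‖ ≤ L * ‖x - x'‖) (hL : 0 < L) (hμ : 0 < μ)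
    (hz : P' x z = P x) (hzn : ‖z‖ ≤ ‖P x‖ / μ) (hsmall : ‖P x‖ ≤ μ ^ 2 / L) :
    ‖P (x - dampedStepSize L μ ‖P x‖ • z)‖ ≤ ‖P x‖ ^ 2 / (2 * (μ ^ 2 / L)) := by
  have hstep := dampedStepSize.eq_one hL (norm_nonneg _) hsmall
  calc _ ≤ _ := norm_newton_step_le hdiff hLip hL.le
        (dampedStepSize.mem_Icc hL.le (norm_nonneg _)) hz hzn
    _ = ‖P x‖ ^ 2 / (2 * (μ ^ 2 / L)) := by
        rw [hstep]
        field_simp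
        ring

end NewtonStep

theorem stmt7_general {n m : ℕ} (L μ : ℝ) (hL : 0 < L) (hμ : 0 < μ)
    (P : EuclideanSpace ℝ (Fin n) → EuclideanSpace ℝ (Fin m))
    (P' : EuclideanSpace ℝ (Fin n) →
      (EuclideanSpace ℝ (Fin n) →L[ℝ] EuclideanSpace ℝ (Fin m)))
    (hdiff : ∀ x, HasFDerivAt P (P' x) x)
    (hLip : ∀ x x', ‖P' x - P' x'‖ ≤ L * ‖x - x'‖)
    (x z : ℕ → EuclideanSpace ℝ (Fin n))
    (hz : ∀ k, P' (x k) (z k) = P (x k))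
    (hznorm : ∀ k, ‖z k‖ ≤ ‖P (x k)‖ / μ)
    (α : ℕ → ℝ)
    (hα0 : ∀ k, P (x k) = 0 → α k = 1)
    (hα1 : ∀ k, P (x k) ≠ 0 → α k = min 1 (μ ^ 2 / (L * ‖P (x k)‖)))
    (hstep : ∀ k, x (k + 1) = x k - α k • z k) :
    (∀ k, ‖P (x (k + 1))‖ ≤ ‖P (x k)‖) ∧
    ∃ xs : EuclideanSpace ℝ (Fin n),
      Filter.Tendsto x Filter.atTop (nhds xs) ∧ P xs = 0 ∧
      (∀ k : ℕ, k < (⌈2 * L * ‖P (x 0)‖ / μ ^ 2⌉ - 2).toNat →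
        ‖P (x k)‖ ≤ ‖P (x 0)‖ - μ ^ 2 / (2 * L) * k) ∧
      (∀ k : ℕ, (⌈2 * L * ‖P (x 0)‖ / μ ^ 2⌉ - 2).toNat ≤ k →
        ‖P (x k)‖ ≤ 2 * μ ^ 2 / L *
          (1 / 2 : ℝ) ^ (2 ^ (k - (⌈2 * L * ‖P (x 0)‖ / μ ^ 2⌉ - 2).toNat))) ∧
      (∀ k : ℕ, (⌈2 * L * ‖P (x 0)‖ / μ ^ 2⌉ - 2).toNat ≤ k →
        ‖x k - xs‖ ≤ 2 * μ / L *
          ∑' ℓ : ℕ, (1 / 2 : ℝ) ^ (2 ^ (ℓ + (k - (⌈2 * L * ‖P (x 0)‖ / μ ^ 2⌉ - 2).toNat)))) ∧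
      (∀ k : ℕ, k < (⌈2 * L * ‖P (x 0)‖ / μ ^ 2⌉ - 2).toNat →
        ‖x k - xs‖ ≤ μ / L *
          (((⌈2 * L * ‖P (x 0)‖ / μ ^ 2⌉ - 2).toNat : ℝ) - k +
            2 * ∑' ℓ : ℕ, (1 / 2 : ℝ) ^ (2 ^ ℓ))) := by
  have hα : ∀ k, α k = dampedStepSize L μ ‖P (x k)‖ := fun k => by
    by_cases h : P (x k) = 0
    · simp [hα0 k h, dampedStepSize, h]
    · simp [hα1 k h, dampedStepSize, h]
  simp_rw [hα] at hstep
  have hres : TwoPhaseDecrease (μ ^ 2 / L) fun k => ‖P (x k)‖ :=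
    { pos := by positivity
      nonneg := fun k => norm_nonneg _
      le_sub_of_le := fun k h => (hstep k).symm ▸
        norm_damped_newton_step_le_sub hdiff hLip hL hμ (hz k) (hznorm k) h
      le_sq_of_le := fun k h => (hstep k).symm ▸
        norm_damped_newton_step_le_sq hdiff hLip hL hμ (hz k) (hznorm k) h }
  obtain ⟨xs, hxs, htail, hhead⟩ := hres.exists_tendsto_dist_le hμ fun k =>
    (hstep k).symm ▸ dist_damped_newton_step_le hL hμ (hznorm k)
  have hPxs : P xs = 0 := norm_eq_zero.1 <|
    tendsto_nhds_unique ((hdiff xs).continuousAt.tendsto.comp hxs).norm hres.tendsto_zero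
  have hK : (⌈2 * L * ‖P (x 0)‖ / μ ^ 2⌉ - 2).toNat = linearPhaseLength ‖P (x 0)‖ (μ ^ 2 / L) := by
    rw [linearPhaseLength]
    congr 3
    field_simp
  rw [hK, show μ ^ 2 / (2 * L) = μ ^ 2 / L / 2 by ring,
    show 2 * μ ^ 2 / L = 2 * (μ ^ 2 / L) by ring,
    show 2 * μ / L = 2 * (μ ^ 2 / L) / μ by field_simp,
    show μ / L = μ ^ 2 / L / μ by field_simp]
  refine ⟨hres.succ_le, xs, hxs, hPxs, fun k hk => hres.le_sub_mul_of_lt_linearPhaseLength hk,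
    fun k hk => hres.le_two_mul_half_pow_two_pow (hres.le_of_linearPhaseLength_le le_rfl) hk,
    fun k hk => ?_, fun k hk => ?_⟩
  · simpa only [dist_eq_norm] using htail k hk
  · simpa only [dist_eq_norm] using hhead k hk

/-- convergence and rate of convergence of Algorithm 1 (basic Newton method)
when assumptions hold on the entire space. -/
theorem stmt7 {n m : ℕ} (L μ : ℝ) (hL : 0 < L) (hμ : 0 < μ)
    (P : EuclideanSpace ℝ (Fin n) → EuclideanSpace ℝ (Fin m))
    (P' : EuclideanSpace ℝ (Fin n) →
      (EuclideanSpace ℝ (Fin n) →L[ℝ] EuclideanSpace ℝ (Fin m)))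
    (hdiff : ∀ x, HasFDerivAt P (P' x) x)
    (hLip : ∀ x x', ‖P' x - P' x'‖ ≤ L * ‖x - x'‖)
    (hμB : ∀ x, ∀ h : EuclideanSpace ℝ (Fin m),
      μ * ‖h‖ ≤ ‖ContinuousLinearMap.adjoint (P' x) h‖)
    (x z : ℕ → EuclideanSpace ℝ (Fin n))
    (hz : ∀ k, P' (x k) (z k) = P (x k))
    (hznorm : ∀ k, ‖z k‖ ≤ ‖P (x k)‖ / μ)
    (α : ℕ → ℝ)
    (hα0 : ∀ k, P (x k) = 0 → α k = 1)
    (hα1 : ∀ k, P (x k) ≠ 0 → α k = min 1 (μ ^ 2 / (L * ‖P (x k)‖)))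
    (hstep : ∀ k, x (k + 1) = x k - α k • z k) :
    (∀ k, ‖P (x (k + 1))‖ ≤ ‖P (x k)‖) ∧
    ∃ xs : EuclideanSpace ℝ (Fin n),
      Filter.Tendsto x Filter.atTop (nhds xs) ∧ P xs = 0 ∧
      (∀ k : ℕ, k < (⌈2 * L * ‖P (x 0)‖ / μ ^ 2⌉ - 2).toNat →
        ‖P (x k)‖ ≤ ‖P (x 0)‖ - μ ^ 2 / (2 * L) * k) ∧
      (∀ k : ℕ, (⌈2 * L * ‖P (x 0)‖ / μ ^ 2⌉ - 2).toNat ≤ k →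
        ‖P (x k)‖ ≤ 2 * μ ^ 2 / L *
          (1 / 2 : ℝ) ^ (2 ^ (k - (⌈2 * L * ‖P (x 0)‖ / μ ^ 2⌉ - 2).toNat))) ∧
      (∀ k : ℕ, (⌈2 * L * ‖P (x 0)‖ / μ ^ 2⌉ - 2).toNat ≤ k →
        ‖x k - xs‖ ≤ 2 * μ / L *
          ∑' ℓ : ℕ, (1 / 2 : ℝ) ^ (2 ^ (ℓ + (k - (⌈2 * L * ‖P (x 0)‖ / μ ^ 2⌉ - 2).toNat)))) ∧
      (∀ k : ℕ, k < (⌈2 * L * ‖P (x 0)‖ / μ ^ 2⌉ - 2).toNat →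
        ‖x k - xs‖ ≤ μ / L *
          (((⌈2 * L * ‖P (x 0)‖ / μ ^ 2⌉ - 2).toNat : ℝ) - k +
            2 * ∑' ℓ : ℕ, (1 / 2 : ℝ) ^ (2 ^ ℓ))) :=
  stmt7_general L μ hL hμ P P' hdiff hLip x z hz hznorm α hα0 hα1 hstep
end

section
/- Let P : ℝⁿ → ℝᵐ be differentiable on the closed ball B = {x : ‖x − x⁰‖ ≤ ρ} with derivative L-Lipschitz on B in the operator norm (‖P'(x) − P'(x')‖ ≤ L‖x − x'‖ for x, x' ∈ B), and suppose there is μ > 0 with ‖P'(x)ᵀh‖ ≥ μ‖h‖ for all x ∈ B and all h ∈ ℝᵐ. Set c = ∑_{ℓ ≥ 0} (1/2)^{2^ℓ}, and assume either (i) Lρ/(2μ) ≤ c and ‖P(x⁰)‖ ≤ (2μ²/L)·(Lρ)/(Lρ + 2μ), or (ii) Lρ/(2μ) > c and ‖P(x⁰)‖ ≤ (μ²/L)·(1 + (1/2)·⌊Lρ/μ − 2c⌋). Let the sequences (x^k), (z^k) satisfy for every k: x^k ∈ B, P'(x^k) z^k = P(x^k), ‖z^k‖ ≤ ‖P(x^k)‖/μ,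 and x^{k+1} = x^k − α_k z^k with α_k = min{1, μ²/(L‖P(x^k)‖)} when P(x^k) ≠ 0 and α_k = 1 otherwise. Then all iterates x^k lie in B, and (x^k) converges to some x* ∈ B with P(x*) = 0. -/
/-!
Taylor's estimate for a map with `L`-Lipschitz derivative bounds the residual after the damped
step `x - α z` by `(1 - α) ‖P x‖ + L / 2 * α ^ 2 * (‖P x‖ / μ) ^ 2`. With the step size
`α = min 1 (μ ^ 2 / (L ‖P x‖))` the residual therefore drops by at least `μ ^ 2 / (2 L)` while it
exceeds `μ ^ 2 / L`, and halves from then on, so the residuals are summable. The steps are bounded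
by the residuals divided by `μ`, hence the iterates form a Cauchy sequence, and continuity of `P` on
the closed ball makes the limit a zero of `P`.
-/

open Set Metric Filter Topology

section StepSize

variable {L μ p q α : ℝ}

theorem damped_step_mem_Icc (hL : 0 < L) (hμ : 0 < μ) (hp : 0 ≤ p) (hα0 : p = 0 → α = 1)
    (hα1 : p ≠ 0 → α = min 1 (μ ^ 2 / (L * p))) : α ∈ Icc (0 : ℝ) 1 := by
  rcases hp.eq_or_lt with rfl | hp
  · simp [hα0 rfl]
  · rw [hα1 hp.ne']
    exact ⟨le_min zero_le_one (by positivity), min_le_left _ _⟩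

theorem le_half_of_damped_step (hL : 0 < L) (hμ : 0 < μ) (hp : 0 ≤ p) (hα0 : p = 0 → α = 1)
    (hα1 : p ≠ 0 → α = min 1 (μ ^ 2 / (L * p)))
    (hq : q ≤ (1 - α) * p + L / 2 * α ^ 2 * (p / μ) ^ 2) (hpμ : p ≤ μ ^ 2 / L) :
    q ≤ p / 2 := by
  have hα : α = 1 := by
    rcases hp.eq_or_lt with rfl | hp
    · exact hα0 rfl
    · rw [hα1 hp.ne', min_eq_left]
      rwa [le_div_iff₀ (by positivity), one_mul, ← le_div_iff₀' hL]
  have hquad : L / 2 * (p / μ) ^ 2 ≤ p / 2 := by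
    calc L / 2 * (p / μ) ^ 2 = L / (2 * μ ^ 2) * p * p := by field_simp
      _ ≤ L / (2 * μ ^ 2) * (μ ^ 2 / L) * p := by gcongr
      _ = p / 2 := by field_simp
  rw [hα] at hq
  linarith

theorem le_sub_of_damped_step (hL : 0 < L) (hμ : 0 < μ)
    (hα1 : p ≠ 0 → α = min 1 (μ ^ 2 / (L * p)))
    (hq : q ≤ (1 - α) * p + L / 2 * α ^ 2 * (p / μ) ^ 2) (hpμ : μ ^ 2 / L < p) :
    q ≤ p - μ ^ 2 / (2 * L) := by
  have hp : 0 < p := lt_trans (by positivity) hpμ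
  have hα : α = μ ^ 2 / (L * p) := by
    rw [hα1 hp.ne', min_eq_right]
    rw [div_le_one (by positivity), ← div_le_iff₀' hL]
    exact hpμ.le
  calc q ≤ (1 - α) * p + L / 2 * α ^ 2 * (p / μ) ^ 2 := hq
    _ = p - μ ^ 2 / (2 * L) := by rw [hα]; field_simp; ring

end StepSize

theorem summable_of_halve_le_of_sub_lt {p : ℕ → ℝ} {θ δ : ℝ} (hp : ∀ k, 0 ≤ p k) (hδ : 0 < δ)
    (hhalve : ∀ k, p k ≤ θ → p (k + 1) ≤ p k / 2) (hsub : ∀ k, θ < p k → p (k + 1) ≤ p k - δ) :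
    Summable p := by
  obtain ⟨K, hK⟩ : ∃ K, p K ≤ θ := by
    by_contra! hθ
    have hlin : ∀ k : ℕ, p k ≤ p 0 - k * δ := by
      intro k
      induction k with
      | zero => simp
      | succ k ih => push_cast; linarith [hsub k (hθ k)]
    obtain ⟨k, hk⟩ := exists_nat_gt (p 0 / δ)
    rw [div_lt_iff₀ hδ] at hk
    linarith [hlin k, hp k]
  have htail : ∀ j, p (j + K) ≤ p K * (1 / 2) ^ j := by
    intro j
    induction j with
    | zero => simp
    | succ j ih =>
      have hθ : p (j + K) ≤ θ := ih.trans <|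
        (mul_le_of_le_one_right (hp K) (pow_le_one₀ (by norm_num) (by norm_num))).trans hK
      calc p (j + 1 + K) = p (j + K + 1) := by rw [Nat.add_right_comm]
        _ ≤ p (j + K) / 2 := hhalve _ hθ
        _ ≤ p K * (1 / 2) ^ (j + 1) := by rw [pow_succ]; linarith
  exact (summable_nat_add_iff K).1 <|
    (summable_geometric_two.mul_left (p K)).of_nonneg_of_le (fun j => hp _) htail

section DampedNewton

variable {E F : Type*} [NormedAddCommGroup E] [NormedSpace ℝ E]
  [NormedAddCommGroup F] [NormedSpace ℝ F] {s : Set E} {f : E → F} {f' : E → E →L[ℝ] F}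
  {L μ : ℝ}

theorem Convex.norm_image_sub_sub_fderiv_le (hs : Convex ℝ s)
    (hf : ∀ x ∈ s, HasFDerivWithinAt f (f' x) s x)
    (hf' : ∀ x ∈ s, ∀ y ∈ s, ‖f' x - f' y‖ ≤ L * ‖x - y‖) {a b : E} (ha : a ∈ s) (hb : b ∈ s) :
    ‖f b - f a - f' a (b - a)‖ ≤ L / 2 * ‖b - a‖ ^ 2 := by
  set v := b - a
  set γ : ℝ → E := fun t => a + t • v
  have hγs : ∀ t ∈ Icc (0 : ℝ) 1, γ t ∈ s := fun t ht => hs.add_smul_sub_mem ha hb ht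
  have hγ : ∀ t, HasDerivAt γ v t := fun t => by
    simpa only [one_smul, id_eq] using ((hasDerivAt_id t).smul_const v).const_add a
  set g : ℝ → F := fun t => f (γ t) - f a - t • f' a v
  have hfc : ContinuousOn f s := fun x hx => (hf x hx).continuousWithinAt
  have hg : ContinuousOn g (Icc 0 1) :=
    ((hfc.comp (by fun_prop) hγs).sub continuousOn_const).sub (by fun_prop)
  have hg' : ∀ t ∈ Ico (0 : ℝ) 1, HasDerivWithinAt g (f' (γ t) v - f' a v) (Ici t) t := by
    intro t ht
    have hfγ : HasDerivWithinAt (f ∘ γ) (f' (γ t) v) (Icc t 1) t :=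
      (hf _ (hγs t (Ico_subset_Icc_self ht))).comp_hasDerivWithinAt t (hγ t).hasDerivWithinAt
        fun r hr => hγs r ⟨ht.1.trans hr.1, hr.2⟩
    have hlin : HasDerivAt (fun r : ℝ => r • f' a v) (f' a v) t := by
      simpa using (hasDerivAt_id t).smul_const (f' a v)
    exact ((hfγ.mono_of_mem_nhdsWithin (Icc_mem_nhdsGE ht.2)).sub_const (f a)).sub
      hlin.hasDerivWithinAt
  have hB : ∀ t, HasDerivAt (fun t : ℝ => L / 2 * ‖v‖ ^ 2 * t ^ 2) (L * ‖v‖ ^ 2 * t) t := by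
    exact fun t => ((hasDerivAt_pow 2 t).const_mul _).congr_deriv (by norm_num; ring)
  have hbound : ∀ t ∈ Ico (0 : ℝ) 1, ‖f' (γ t) v - f' a v‖ ≤ L * ‖v‖ ^ 2 * t := by
    intro t ht
    have hγa : ‖γ t - a‖ = t * ‖v‖ := by simp [γ, norm_smul, abs_of_nonneg ht.1]
    calc ‖f' (γ t) v - f' a v‖ = ‖(f' (γ t) - f' a) v‖ := rfl
      _ ≤ ‖f' (γ t) - f' a‖ * ‖v‖ := (f' (γ t) - f' a).le_opNorm v
      _ ≤ L * ‖γ t - a‖ * ‖v‖ := by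
        gcongr
        exact hf' _ (hγs t (Ico_subset_Icc_self ht)) _ ha
      _ = L * ‖v‖ ^ 2 * t := by rw [hγa]; ring
  have := image_norm_le_of_norm_deriv_right_le_deriv_boundary hg hg' (by simp [g, γ]) hB hbound
    (right_mem_Icc.2 zero_le_one)
  simpa [g, γ, v] using this

theorem Convex.norm_image_newton_step_le (hs : Convex ℝ s)
    (hf : ∀ x ∈ s, HasFDerivWithinAt f (f' x) s x)
    (hf' : ∀ x ∈ s, ∀ y ∈ s, ‖f' x - f' y‖ ≤ L * ‖x - y‖) (hL : 0 ≤ L) {a z : E} {t : ℝ}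
    (ha : a ∈ s) (hb : a - t • z ∈ s) (ht : t ∈ Icc (0 : ℝ) 1) (hz : f' a z = f a)
    (hzn : ‖z‖ ≤ ‖f a‖ / μ) :
    ‖f (a - t • z)‖ ≤ (1 - t) * ‖f a‖ + L / 2 * t ^ 2 * (‖f a‖ / μ) ^ 2 := by
  set b := a - t • z
  have hba : b - a = -(t • z) := by simp [b]
  have hsplit : f b = (f b - f a - f' a (b - a)) + (1 - t) • f a := by
    rw [hba, map_neg, map_smul, hz, sub_smul, one_smul]; abel
  have hstep : ‖b - a‖ ≤ t * (‖f a‖ / μ) := by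
    rw [hba, norm_neg, norm_smul, Real.norm_of_nonneg ht.1]
    exact mul_le_mul_of_nonneg_left hzn ht.1
  calc ‖f b‖ ≤ ‖f b - f a - f' a (b - a)‖ + ‖(1 - t) • f a‖ := by
        conv_lhs => rw [hsplit]
        exact norm_add_le _ _
    _ ≤ L / 2 * ‖b - a‖ ^ 2 + (1 - t) * ‖f a‖ := by
      rw [norm_smul, Real.norm_of_nonneg (sub_nonneg.2 ht.2)]
      gcongr
      exact hs.norm_image_sub_sub_fderiv_le hf hf' ha hb
    _ ≤ L / 2 * (t * (‖f a‖ / μ)) ^ 2 + (1 - t) * ‖f a‖ := by gcongr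
    _ = (1 - t) * ‖f a‖ + L / 2 * t ^ 2 * (‖f a‖ / μ) ^ 2 := by ring

theorem Convex.summable_norm_damped_newton (hs : Convex ℝ s)
    (hf : ∀ x ∈ s, HasFDerivWithinAt f (f' x) s x)
    (hf' : ∀ x ∈ s, ∀ y ∈ s, ‖f' x - f' y‖ ≤ L * ‖x - y‖) (hL : 0 < L) (hμ : 0 < μ)
    {x z : ℕ → E} {α : ℕ → ℝ} (hxs : ∀ k, x k ∈ s) (hz : ∀ k, f' (x k) (z k) = f (x k))
    (hzn : ∀ k, ‖z k‖ ≤ ‖f (x k)‖ / μ) (hα0 : ∀ k, f (x k) = 0 → α k = 1)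
    (hα1 : ∀ k, f (x k) ≠ 0 → α k = min 1 (μ ^ 2 / (L * ‖f (x k)‖)))
    (hα : ∀ k, α k ∈ Icc (0 : ℝ) 1) (hstep : ∀ k, x (k + 1) = x k - α k • z k) :
    Summable fun k => ‖f (x k)‖ := by
  have hdesc : ∀ k, ‖f (x (k + 1))‖ ≤
      (1 - α k) * ‖f (x k)‖ + L / 2 * α k ^ 2 * (‖f (x k)‖ / μ) ^ 2 := fun k => by
    rw [hstep k]
    exact hs.norm_image_newton_step_le hf hf' hL.le (hxs k) (hstep k ▸ hxs (k + 1)) (hα k)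
      (hz k) (hzn k)
  exact summable_of_halve_le_of_sub_lt (fun k => norm_nonneg _) (by positivity)
    (fun k => le_half_of_damped_step hL hμ (norm_nonneg _) (fun h => hα0 k (norm_eq_zero.1 h))
      (fun h => hα1 k (norm_ne_zero_iff.1 h)) (hdesc k))
    (fun k => le_sub_of_damped_step hL hμ (fun h => hα1 k (norm_ne_zero_iff.1 h)) (hdesc k))

end DampedNewton

theorem stmt8_general {n m : ℕ} (ρ L μ : ℝ) (hL : 0 < L) (hμ : 0 < μ)
    (x0 : EuclideanSpace ℝ (Fin n))
    (P : EuclideanSpace ℝ (Fin n) → EuclideanSpace ℝ (Fin m))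
    (P' : EuclideanSpace ℝ (Fin n) →
      (EuclideanSpace ℝ (Fin n) →L[ℝ] EuclideanSpace ℝ (Fin m)))
    (hdiff : ∀ x ∈ Metric.closedBall x0 ρ,
      HasFDerivWithinAt P (P' x) (Metric.closedBall x0 ρ) x)
    (hLip : ∀ x ∈ Metric.closedBall x0 ρ, ∀ x' ∈ Metric.closedBall x0 ρ,
      ‖P' x - P' x'‖ ≤ L * ‖x - x'‖)
    (x z : ℕ → EuclideanSpace ℝ (Fin n))
    (hxB : ∀ k, x k ∈ Metric.closedBall x0 ρ)
    (hz : ∀ k, P' (x k) (z k) = P (x k))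
    (hznorm : ∀ k, ‖z k‖ ≤ ‖P (x k)‖ / μ)
    (α : ℕ → ℝ)
    (hα0 : ∀ k, P (x k) = 0 → α k = 1)
    (hα1 : ∀ k, P (x k) ≠ 0 → α k = min 1 (μ ^ 2 / (L * ‖P (x k)‖)))
    (hstep : ∀ k, x (k + 1) = x k - α k • z k) :
    (∀ k, x k ∈ Metric.closedBall x0 ρ) ∧
    ∃ xs ∈ Metric.closedBall x0 ρ,
      Filter.Tendsto x Filter.atTop (nhds xs) ∧ P xs = 0 := by
  have hα : ∀ k, α k ∈ Icc (0 : ℝ) 1 := fun k =>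
    damped_step_mem_Icc hL hμ (norm_nonneg _) (fun h => hα0 k (norm_eq_zero.1 h))
      (fun h => hα1 k (norm_ne_zero_iff.1 h))
  have hsum := (convex_closedBall x0 ρ).summable_norm_damped_newton hdiff hLip hL hμ hxB hz
    hznorm hα0 hα1 hα hstep
  have hdist : ∀ k, dist (x k) (x (k + 1)) ≤ ‖P (x k)‖ / μ := fun k => by
    rw [hstep k, dist_eq_norm, sub_sub_cancel, norm_smul, Real.norm_of_nonneg (hα k).1]
    exact (mul_le_of_le_one_left (norm_nonneg _) (hα k).2).trans (hznorm k)
  obtain ⟨xs, hxs⟩ := cauchySeq_tendsto_of_complete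
    (cauchySeq_of_dist_le_of_summable _ hdist (hsum.div_const μ))
  have hmem : xs ∈ closedBall x0 ρ := isClosed_closedBall.mem_of_tendsto hxs (.of_forall hxB)
  have hPx : Tendsto (fun k => P (x k)) atTop (𝓝 (P xs)) :=
    (hdiff xs hmem).continuousWithinAt.tendsto.comp
      (tendsto_nhdsWithin_iff.2 ⟨hxs, .of_forall hxB⟩)
  exact ⟨hxB, xs, hmem, hxs,
    tendsto_nhds_unique hPx (tendsto_zero_iff_norm_tendsto_zero.2 hsum.tendsto_atTop_zero)⟩

/-- Algorithm 1 on a ball: under condition (i) or (ii) on `‖P(x⁰)‖`,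
all iterates stay in the ball and converge to a solution. -/
theorem stmt8 {n m : ℕ} (ρ L μ : ℝ) (hρ : 0 < ρ) (hL : 0 < L) (hμ : 0 < μ)
    (x0 : EuclideanSpace ℝ (Fin n))
    (P : EuclideanSpace ℝ (Fin n) → EuclideanSpace ℝ (Fin m))
    (P' : EuclideanSpace ℝ (Fin n) →
      (EuclideanSpace ℝ (Fin n) →L[ℝ] EuclideanSpace ℝ (Fin m)))
    (hdiff : ∀ x ∈ Metric.closedBall x0 ρ,
      HasFDerivWithinAt P (P' x) (Metric.closedBall x0 ρ) x)
    (hLip : ∀ x ∈ Metric.closedBall x0 ρ, ∀ x' ∈ Metric.closedBall x0 ρ,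
      ‖P' x - P' x'‖ ≤ L * ‖x - x'‖)
    (hμB : ∀ x ∈ Metric.closedBall x0 ρ, ∀ h : EuclideanSpace ℝ (Fin m),
      μ * ‖h‖ ≤ ‖ContinuousLinearMap.adjoint (P' x) h‖)
    (hcond :
      (L * ρ / (2 * μ) ≤ (∑' ℓ : ℕ, (1 / 2 : ℝ) ^ (2 ^ ℓ)) ∧
        ‖P x0‖ ≤ 2 * μ ^ 2 / L * (L * ρ / (L * ρ + 2 * μ))) ∨
      ((∑' ℓ : ℕ, (1 / 2 : ℝ) ^ (2 ^ ℓ)) < L * ρ / (2 * μ) ∧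
        ‖P x0‖ ≤ μ ^ 2 / L *
          (1 + (1 / 2) * (⌊L * ρ / μ - 2 * ∑' ℓ : ℕ, (1 / 2 : ℝ) ^ (2 ^ ℓ)⌋ : ℝ))))
    (x z : ℕ → EuclideanSpace ℝ (Fin n))
    (hx0 : x 0 = x0)
    (hxB : ∀ k, x k ∈ Metric.closedBall x0 ρ)
    (hz : ∀ k, P' (x k) (z k) = P (x k))
    (hznorm : ∀ k, ‖z k‖ ≤ ‖P (x k)‖ / μ)
    (α : ℕ → ℝ)
    (hα0 : ∀ k, P (x k) = 0 → α k = 1)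
    (hα1 : ∀ k, P (x k) ≠ 0 → α k = min 1 (μ ^ 2 / (L * ‖P (x k)‖)))
    (hstep : ∀ k, x (k + 1) = x k - α k • z k) :
    (∀ k, x k ∈ Metric.closedBall x0 ρ) ∧
    ∃ xs ∈ Metric.closedBall x0 ρ,
      Filter.Tendsto x Filter.atTop (nhds xs) ∧ P xs = 0 :=
  stmt8_general ρ L μ hL hμ x0 P P' hdiff hLip x z hxB hz hznorm α hα0 hα1 hstep
end

section
/- Let P : ℝⁿ → ℝᵐ be differentiable on the closed ball B = {x : ‖x − x⁰‖ ≤ ρ} with derivative L-Lipschitz on B in the operator norm (‖P'(x) − P'(x')‖ ≤ L‖x − x'‖ for x, x' ∈ B), and suppose there is μ > 0 with ‖P'(x)ᵀh‖ ≥ μ‖h‖ for all x ∈ B and all h ∈ ℝᵐ. Set δ = (L/(2μ²))·‖P(x⁰)‖ and assume δ < 1 and (2μ/L)·∑_{ℓ ≥ 0} δ^{2^ℓ} ≤ ρ. Let the sequences (x^k), (z^k) satisfy for every k: P'(x^k) z^k = P(x^k), ‖z^k‖ ≤ ‖P(x^k)‖/μ, and x^{k+1} = x^k − z^k (pure Newton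 steps). Then all iterates lie in B, the sequence (x^k) converges to some x* with P(x*) = 0, and for every k: ‖P(x^k)‖ ≤ (2μ²/L)·δ^{2^k} and ‖x^k − x*‖ ≤ (2μ/L)·∑_{ℓ ≥ k} δ^{2^ℓ}. -/
/-!
Along the segment from `a` to `b` the error of the linearisation has derivative of norm at most
`L t ‖b - a‖²`, so a Lipschitz derivative gives `‖P b - P a - P' a (b - a)‖ ≤ L/2 ‖b - a‖²`.
For a Newton step `P' x z = P x` this reads `‖P (x - z)‖ ≤ L/2 ‖z‖²`, and with `‖z‖ ≤ ‖P x‖/μ`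
the quantity `L/(2μ²) ‖P xₖ‖` is at most squared at each step. Hence `‖P xₖ‖ ≤ (2μ²/L) δ^(2^k)`,
the steps are bounded by `(2μ/L) δ^(2^k)`, whose sum keeps the iterates in the ball, and the
iterates form a Cauchy sequence whose limit is a zero of `P`.
-/

open Set Filter Topology Metric

section Taylor

variable {E F : Type*} [NormedAddCommGroup E] [NormedSpace ℝ E]
  [NormedAddCommGroup F] [NormedSpace ℝ F] {s : Set E} {P : E → F} {P' : E → E →L[ℝ] F} {L : ℝ}

theorem Convex.norm_sub_sub_fderiv_le_of_lipschitz (hs : Convex ℝ s)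
    (hd : ∀ x ∈ s, HasFDerivWithinAt P (P' x) s x)
    (hLip : ∀ x ∈ s, ∀ y ∈ s, ‖P' x - P' y‖ ≤ L * ‖x - y‖)
    {a b : E} (ha : a ∈ s) (hb : b ∈ s) :
    ‖P b - P a - P' a (b - a)‖ ≤ L / 2 * ‖b - a‖ ^ 2 := by
  set g : ℝ → E := fun t => a + t • (b - a)
  have hg : ∀ t ∈ Icc (0 : ℝ) 1, g t ∈ s := fun t ht => hs.add_smul_sub_mem ha hb ht
  set f : ℝ → F := fun t => P (g t) - P a - t • P' a (b - a)
  have hf : ∀ t ∈ Icc (0 : ℝ) 1,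
      HasDerivWithinAt f (P' (g t) (b - a) - P' a (b - a)) (Icc 0 1) t := by
    intro t ht
    have hPg := (hd (g t) (hg t ht)).comp_hasDerivWithinAt t
      (((hasDerivAt_id t).smul_const (b - a)).const_add a).hasDerivWithinAt hg
    have hft := (hPg.sub_const (P a)).sub ((hasDerivWithinAt_id t _).smul_const (P' a (b - a)))
    simp only [one_smul] at hft
    exact hft
  have hf' : ∀ t ∈ Ico (0 : ℝ) 1,
      HasDerivWithinAt f (P' (g t) (b - a) - P' a (b - a)) (Ici t) t := fun t ht =>
    (hf t (Ico_subset_Icc_self ht)).mono_of_mem_nhdsWithin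
      (Icc_mem_nhdsGE_of_mem ⟨ht.1, ht.2⟩)
  have hB : ∀ t, HasDerivAt (fun t => L / 2 * ‖b - a‖ ^ 2 * t ^ 2) (L * ‖b - a‖ ^ 2 * t) t :=
    fun t => ((hasDerivAt_pow 2 t).const_mul _).congr_deriv (by ring)
  have bound : ∀ t ∈ Ico (0 : ℝ) 1, ‖P' (g t) (b - a) - P' a (b - a)‖ ≤ L * ‖b - a‖ ^ 2 * t := by
    intro t ht
    have hgt : ‖g t - a‖ = t * ‖b - a‖ := by simp [g, norm_smul, abs_of_nonneg ht.1]
    calc ‖P' (g t) (b - a) - P' a (b - a)‖ ≤ ‖P' (g t) - P' a‖ * ‖b - a‖ :=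
          (P' (g t) - P' a).le_opNorm (b - a)
      _ ≤ L * ‖g t - a‖ * ‖b - a‖ := by
          gcongr; exact hLip _ (hg t (Ico_subset_Icc_self ht)) _ ha
      _ = L * ‖b - a‖ ^ 2 * t := by rw [hgt]; ring
  have := image_norm_le_of_norm_deriv_right_le_deriv_boundary
    (fun t ht => (hf t ht).continuousWithinAt) hf' (by simp [f, g]) hB bound
    (right_mem_Icc.2 zero_le_one)
  simpa [f, g] using this

theorem Convex.norm_newton_step_le (hs : Convex ℝ s)
    (hd : ∀ x ∈ s, HasFDerivWithinAt P (P' x) s x)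
    (hLip : ∀ x ∈ s, ∀ y ∈ s, ‖P' x - P' y‖ ≤ L * ‖x - y‖)
    {x z : E} (hx : x ∈ s) (hxz : x - z ∈ s) (hz : P' x z = P x) :
    ‖P (x - z)‖ ≤ L / 2 * ‖z‖ ^ 2 := by
  simpa [hz] using hs.norm_sub_sub_fderiv_le_of_lipschitz hd hLip hx hxz

end Taylor

section DoubleExponential

variable {d : ℝ}

theorem pow_two_pow_le_pow (hd0 : 0 ≤ d) (hd1 : d ≤ 1) (ℓ : ℕ) : d ^ 2 ^ ℓ ≤ d ^ ℓ :=
  pow_le_pow_of_le_one hd0 hd1 Nat.lt_two_pow_self.le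

theorem summable_pow_two_pow_s9 (hd0 : 0 ≤ d) (hd1 : d < 1) : Summable fun ℓ : ℕ => d ^ 2 ^ ℓ :=
  .of_nonneg_of_le (fun _ => by positivity) (pow_two_pow_le_pow hd0 hd1.le)
    (summable_geometric_of_lt_one hd0 hd1)

theorem tendsto_pow_two_pow_atTop_nhds_zero (hd0 : 0 ≤ d) (hd1 : d < 1) :
    Tendsto (fun ℓ : ℕ => d ^ 2 ^ ℓ) atTop (𝓝 0) :=
  squeeze_zero (fun _ => by positivity) (pow_two_pow_le_pow hd0 hd1.le)
    (tendsto_pow_atTop_nhds_zero_of_lt_one hd0 hd1)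

end DoubleExponential

theorem mem_closedBall_of_norm_sub_le_partial_sum {E : Type*} [SeminormedAddCommGroup E]
    {x₀ : E} {ρ δ c : ℝ} (hc : 0 ≤ c) (hδ0 : 0 ≤ δ) (hδ : δ < 1)
    (hρ : c * ∑' ℓ : ℕ, δ ^ 2 ^ ℓ ≤ ρ) {y : E} {k : ℕ}
    (hy : ‖y - x₀‖ ≤ c * ∑ ℓ ∈ Finset.range k, δ ^ 2 ^ ℓ) : y ∈ closedBall x₀ ρ := by
  rw [mem_closedBall, dist_eq_norm]
  refine hy.trans (le_trans ?_ hρ)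
  gcongr
  exact (summable_pow_two_pow_s9 hδ0 hδ).sum_le_tsum _ fun ℓ _ => by positivity

theorem exists_tendsto_dist_le_tsum_of_dist_le_of_summable {α : Type*} [PseudoMetricSpace α]
    [CompleteSpace α] {x : ℕ → α} {a : ℕ → ℝ} (hx : ∀ k, dist (x k) (x (k + 1)) ≤ a k)
    (ha : Summable a) :
    ∃ xs, Tendsto x atTop (𝓝 xs) ∧ ∀ k, dist (x k) xs ≤ ∑' ℓ, a (k + ℓ) := by
  obtain ⟨xs, hxs⟩ := cauchySeq_tendsto_of_complete (cauchySeq_of_dist_le_of_summable a hx ha)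
  exact ⟨xs, hxs, dist_le_tsum_of_dist_le_of_tendsto a hx ha hxs⟩

theorem norm_step_le_of_scaled_residual_le {E F : Type*} [NormedAddCommGroup E]
    [NormedAddCommGroup F] {L μ : ℝ} (hL : 0 < L) (hμ : 0 < μ) {z : E} {p : F} {t : ℝ}
    (hzn : ‖z‖ ≤ ‖p‖ / μ) (hp : L / (2 * μ ^ 2) * ‖p‖ ≤ t) : ‖z‖ ≤ 2 * μ / L * t :=
  calc ‖z‖ ≤ ‖p‖ / μ := hzn
    _ = 2 * μ / L * (L / (2 * μ ^ 2) * ‖p‖) := by field_simp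
    _ ≤ 2 * μ / L * t := by gcongr

section Newton

variable {E F : Type*} [NormedAddCommGroup E] [NormedSpace ℝ E]
  [NormedAddCommGroup F] [NormedSpace ℝ F] {P : E → F} {P' : E → E →L[ℝ] F} {L μ : ℝ}

theorem Convex.newton_scaled_residual_le_sq {s : Set E} (hs : Convex ℝ s)
    (hd : ∀ x ∈ s, HasFDerivWithinAt P (P' x) s x)
    (hLip : ∀ x ∈ s, ∀ y ∈ s, ‖P' x - P' y‖ ≤ L * ‖x - y‖) (hL : 0 ≤ L)
    {x z : E} (hx : x ∈ s) (hxz : x - z ∈ s) (hz : P' x z = P x) (hzn : ‖z‖ ≤ ‖P x‖ / μ) :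
    L / (2 * μ ^ 2) * ‖P (x - z)‖ ≤ (L / (2 * μ ^ 2) * ‖P x‖) ^ 2 :=
  calc L / (2 * μ ^ 2) * ‖P (x - z)‖ ≤ L / (2 * μ ^ 2) * (L / 2 * ‖z‖ ^ 2) := by
        gcongr; exact hs.norm_newton_step_le hd hLip hx hxz hz
    _ ≤ L / (2 * μ ^ 2) * (L / 2 * (‖P x‖ / μ) ^ 2) := by gcongr
    _ = (L / (2 * μ ^ 2) * ‖P x‖) ^ 2 := by ring

variable {x₀ : E} {ρ δ : ℝ} {x z : ℕ → E}

theorem newton_iterates_dist_le_and_residual_le (hL : 0 < L) (hμ : 0 < μ)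
    (hd : ∀ x ∈ closedBall x₀ ρ, HasFDerivWithinAt P (P' x) (closedBall x₀ ρ) x)
    (hLip : ∀ x ∈ closedBall x₀ ρ, ∀ y ∈ closedBall x₀ ρ, ‖P' x - P' y‖ ≤ L * ‖x - y‖)
    (hδ₀ : L / (2 * μ ^ 2) * ‖P x₀‖ ≤ δ) (hδ : δ < 1)
    (hρ : 2 * μ / L * ∑' ℓ : ℕ, δ ^ 2 ^ ℓ ≤ ρ)
    (hx0 : x 0 = x₀) (hz : ∀ k, P' (x k) (z k) = P (x k))
    (hzn : ∀ k, ‖z k‖ ≤ ‖P (x k)‖ / μ) (hstep : ∀ k, x (k + 1) = x k - z k) (k : ℕ) :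
    ‖x k - x₀‖ ≤ 2 * μ / L * ∑ ℓ ∈ Finset.range k, δ ^ 2 ^ ℓ ∧
      L / (2 * μ ^ 2) * ‖P (x k)‖ ≤ δ ^ 2 ^ k := by
  have hδ0 : 0 ≤ δ := le_trans (by positivity) hδ₀
  have mem_ball {k : ℕ} : ‖x k - x₀‖ ≤ 2 * μ / L * ∑ ℓ ∈ Finset.range k, δ ^ 2 ^ ℓ →
      x k ∈ closedBall x₀ ρ :=
    mem_closedBall_of_norm_sub_le_partial_sum (by positivity) hδ0 hδ hρ
  induction k with
  | zero => simpa [hx0] using hδ₀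
  | succ k ih =>
    have hzk := norm_step_le_of_scaled_residual_le hL hμ (hzn k) ih.2
    have hdist : ‖x (k + 1) - x₀‖ ≤ 2 * μ / L * ∑ ℓ ∈ Finset.range (k + 1), δ ^ 2 ^ ℓ :=
      calc ‖x (k + 1) - x₀‖ = ‖(x k - x₀) - z k‖ := by rw [hstep k, sub_right_comm]
        _ ≤ ‖x k - x₀‖ + ‖z k‖ := norm_sub_le _ _
        _ ≤ 2 * μ / L * ∑ ℓ ∈ Finset.range k, δ ^ 2 ^ ℓ + 2 * μ / L * δ ^ 2 ^ k :=
          add_le_add ih.1 hzk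
        _ = 2 * μ / L * ∑ ℓ ∈ Finset.range (k + 1), δ ^ 2 ^ ℓ := by
          rw [Finset.sum_range_succ, mul_add]
    refine ⟨hdist, ?_⟩
    have hxk1 := mem_ball hdist
    rw [hstep k] at hxk1 ⊢
    calc L / (2 * μ ^ 2) * ‖P (x k - z k)‖ ≤ (L / (2 * μ ^ 2) * ‖P (x k)‖) ^ 2 :=
          (convex_closedBall x₀ ρ).newton_scaled_residual_le_sq hd hLip hL.le
            (mem_ball ih.1) hxk1 (hz k) (hzn k)
      _ ≤ (δ ^ 2 ^ k) ^ 2 := by gcongr; exact ih.2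
      _ = δ ^ 2 ^ (k + 1) := by rw [← pow_mul, pow_succ]

end Newton

theorem stmt9_general {n m : ℕ} (ρ L μ : ℝ) (hL : 0 < L) (hμ : 0 < μ)
    (x0 : EuclideanSpace ℝ (Fin n))
    (P : EuclideanSpace ℝ (Fin n) → EuclideanSpace ℝ (Fin m))
    (P' : EuclideanSpace ℝ (Fin n) →
      (EuclideanSpace ℝ (Fin n) →L[ℝ] EuclideanSpace ℝ (Fin m)))
    (hdiff : ∀ x ∈ Metric.closedBall x0 ρ,
      HasFDerivWithinAt P (P' x) (Metric.closedBall x0 ρ) x)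
    (hLip : ∀ x ∈ Metric.closedBall x0 ρ, ∀ x' ∈ Metric.closedBall x0 ρ,
      ‖P' x - P' x'‖ ≤ L * ‖x - x'‖)
    (hδ : L / (2 * μ ^ 2) * ‖P x0‖ < 1)
    (hρbound : 2 * μ / L *
      (∑' ℓ : ℕ, (L / (2 * μ ^ 2) * ‖P x0‖) ^ (2 ^ ℓ)) ≤ ρ)
    (x z : ℕ → EuclideanSpace ℝ (Fin n))
    (hx0 : x 0 = x0)
    (hz : ∀ k, P' (x k) (z k) = P (x k))
    (hznorm : ∀ k, ‖z k‖ ≤ ‖P (x k)‖ / μ)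
    (hstep : ∀ k, x (k + 1) = x k - z k) :
    (∀ k, x k ∈ Metric.closedBall x0 ρ) ∧
    ∃ xs : EuclideanSpace ℝ (Fin n),
      Filter.Tendsto x Filter.atTop (nhds xs) ∧ P xs = 0 ∧
      (∀ k : ℕ, ‖P (x k)‖ ≤ 2 * μ ^ 2 / L * (L / (2 * μ ^ 2) * ‖P x0‖) ^ (2 ^ k)) ∧
      (∀ k : ℕ, ‖x k - xs‖ ≤ 2 * μ / L *
        ∑' ℓ : ℕ, (L / (2 * μ ^ 2) * ‖P x0‖) ^ (2 ^ (ℓ + k))) := by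
  set δ := L / (2 * μ ^ 2) * ‖P x0‖
  have hδ0 : 0 ≤ δ := by positivity
  have hiter := newton_iterates_dist_le_and_residual_le hL hμ hdiff hLip le_rfl hδ hρbound
    hx0 hz hznorm hstep
  have hball k : x k ∈ closedBall x0 ρ :=
    mem_closedBall_of_norm_sub_le_partial_sum (by positivity) hδ0 hδ hρbound (hiter k).1
  have hres k : ‖P (x k)‖ ≤ 2 * μ ^ 2 / L * δ ^ 2 ^ k := by
    rw [← inv_div, le_inv_mul_iff₀ (by positivity)]
    exact (hiter k).2
  have hsteps k : dist (x k) (x (k + 1)) ≤ 2 * μ / L * δ ^ 2 ^ k := by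
    rw [hstep k, dist_self_sub_right]
    exact norm_step_le_of_scaled_residual_le hL hμ (hznorm k) (hiter k).2
  obtain ⟨xs, hlim, hdist⟩ := exists_tendsto_dist_le_tsum_of_dist_le_of_summable hsteps
    ((summable_pow_two_pow_s9 hδ0 hδ).mul_left _)
  have hxs : xs ∈ closedBall x0 ρ := isClosed_closedBall.mem_of_tendsto hlim (.of_forall hball)
  have hPlim : Tendsto (fun k => P (x k)) atTop (𝓝 (P xs)) :=
    (hdiff xs hxs).continuousWithinAt.tendsto.comp
      (tendsto_nhdsWithin_iff.2 ⟨hlim, .of_forall hball⟩)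
  have hPzero : Tendsto (fun k => P (x k)) atTop (𝓝 0) := squeeze_zero_norm hres (by
    simpa using (tendsto_pow_two_pow_atTop_nhds_zero hδ0 hδ).const_mul (2 * μ ^ 2 / L))
  refine ⟨hball, xs, hlim, tendsto_nhds_unique hPlim hPzero, hres, fun k => ?_⟩
  simpa [dist_eq_norm, tsum_mul_left, add_comm] using hdist k

/-- pure Newton method: convergence and quadratic rate. -/
theorem stmt9 {n m : ℕ} (ρ L μ : ℝ) (hρ : 0 < ρ) (hL : 0 < L) (hμ : 0 < μ)
    (x0 : EuclideanSpace ℝ (Fin n))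
    (P : EuclideanSpace ℝ (Fin n) → EuclideanSpace ℝ (Fin m))
    (P' : EuclideanSpace ℝ (Fin n) →
      (EuclideanSpace ℝ (Fin n) →L[ℝ] EuclideanSpace ℝ (Fin m)))
    (hdiff : ∀ x ∈ Metric.closedBall x0 ρ,
      HasFDerivWithinAt P (P' x) (Metric.closedBall x0 ρ) x)
    (hLip : ∀ x ∈ Metric.closedBall x0 ρ, ∀ x' ∈ Metric.closedBall x0 ρ,
      ‖P' x - P' x'‖ ≤ L * ‖x - x'‖)
    (hμB : ∀ x ∈ Metric.closedBall x0 ρ, ∀ h : EuclideanSpace ℝ (Fin m),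
      μ * ‖h‖ ≤ ‖ContinuousLinearMap.adjoint (P' x) h‖)
    (hδ : L / (2 * μ ^ 2) * ‖P x0‖ < 1)
    (hρbound : 2 * μ / L *
      (∑' ℓ : ℕ, (L / (2 * μ ^ 2) * ‖P x0‖) ^ (2 ^ ℓ)) ≤ ρ)
    (x z : ℕ → EuclideanSpace ℝ (Fin n))
    (hx0 : x 0 = x0)
    (hz : ∀ k, P' (x k) (z k) = P (x k))
    (hznorm : ∀ k, ‖z k‖ ≤ ‖P (x k)‖ / μ)
    (hstep : ∀ k, x (k + 1) = x k - z k) :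
    (∀ k, x k ∈ Metric.closedBall x0 ρ) ∧
    ∃ xs : EuclideanSpace ℝ (Fin n),
      Filter.Tendsto x Filter.atTop (nhds xs) ∧ P xs = 0 ∧
      (∀ k : ℕ, ‖P (x k)‖ ≤ 2 * μ ^ 2 / L * (L / (2 * μ ^ 2) * ‖P x0‖) ^ (2 ^ k)) ∧
      (∀ k : ℕ, ‖x k - xs‖ ≤ 2 * μ / L *
        ∑' ℓ : ℕ, (L / (2 * μ ^ 2) * ‖P x0‖) ^ (2 ^ (ℓ + k))) :=
  stmt9_general ρ L μ hL hμ x0 P P' hdiff hLip hδ hρbound x z hx0 hz hznorm hstep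
end

section
/- Let g : ℝⁿ → ℝᵐ be the quadratic map with components g_i(x) = (1/2)⟨A_i x, x⟩ + ⟨b_i, x⟩, where each A_i is a symmetric real n×n matrix and b_i ∈ ℝⁿ. Let H be the m×n matrix whose rows are b₁ᵀ, …, b_mᵀ, and suppose there is μ₀ > 0 with ‖Hᵀh‖ ≥ μ₀‖h‖ for all h ∈ ℝᵐ. Let L > 0 be a Lipschitz constant for the derivative g' on ℝⁿ in the operator norm (‖g'(x) − g'(x')‖ ≤ L‖x − x'‖ for all x, x'). Then for every y ∈ ℝᵐ with ‖y‖ < μ₀²/(4L) there exists x* with g(x*) = y and ‖x*‖ ≤ μ₀/(2L). -/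
/-!
Near `0` the map `g` is well approximated by its derivative `g' 0 = H`. The lower bound on `Hᵀ`
makes `H Hᵀ` injective, hence invertible, so every `y` is `H x` with `x = Hᵀ h`, and
`‖x‖² = ⟪y, h⟫ ≤ ‖y‖ ‖x‖ / μ₀` gives a right inverse of `H` of norm at most `μ₀⁻¹`. On the ball of
radius `ε = μ₀ / (2L)` the Lipschitz bound keeps `g'` within `μ₀ / 2` of `H`, so Graves' theorem
(a Newton iteration driven by this right inverse) shows that `g` maps that ball onto the ball of
radius `(μ₀ - μ₀ / 2) ε = μ₀² / (4L)` around `g 0 = 0`.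
-/

open Metric ContinuousLinearMap
open scoped RealInnerProductSpace

theorem ContinuousLinearMap.exists_preimage_norm_le_of_adjoint_bound
    {E F : Type*} [NormedAddCommGroup E] [InnerProductSpace ℝ E] [CompleteSpace E]
    [NormedAddCommGroup F] [InnerProductSpace ℝ F] [FiniteDimensional ℝ F]
    (T : E →L[ℝ] F) {μ : ℝ} (hμ : 0 < μ) (hT : ∀ h, μ * ‖h‖ ≤ ‖adjoint T h‖) (y : F) :
    ∃ x, T x = y ∧ ‖x‖ ≤ μ⁻¹ * ‖y‖ := by
  have norm_sq : ∀ h, ‖adjoint T h‖ ^ 2 = ⟪T (adjoint T h), h⟫ := fun h => by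
    rw [← adjoint_inner_right, real_inner_self_eq_norm_sq]
  have hinj : Function.Injective (T ∘L adjoint T) := by
    refine (injective_iff_map_eq_zero _).2 fun h hh => norm_le_zero_iff.1 ?_
    have : ‖adjoint T h‖ = 0 :=
      pow_eq_zero_iff two_ne_zero |>.1 <| by rw [norm_sq, ← comp_apply, hh, inner_zero_left]
    nlinarith [hT h, norm_nonneg h]
  obtain ⟨h, rfl⟩ := LinearMap.injective_iff_surjective.1 hinj y
  refine ⟨adjoint T h, rfl, ?_⟩
  change ‖adjoint T h‖ ≤ μ⁻¹ * ‖T (adjoint T h)‖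
  set x := adjoint T h
  have key : μ * ‖x‖ ^ 2 ≤ ‖T x‖ * ‖x‖ := calc
    μ * ‖x‖ ^ 2 = ⟪T x, h⟫ * μ := by rw [norm_sq]; ring
    _ ≤ ‖T x‖ * (μ * ‖h‖) := by nlinarith [real_inner_le_norm (T x) h]
    _ ≤ ‖T x‖ * ‖x‖ := by gcongr; exact hT h
  rw [le_inv_mul_iff₀ hμ]
  rcases (norm_nonneg x).eq_or_lt with hx | hx
  · rw [← hx, mul_zero]; exact norm_nonneg _
  · nlinarith

theorem exists_norm_le_eq_of_lipschitz_fderiv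
    {E F : Type*} [NormedAddCommGroup E] [NormedSpace ℝ E] [CompleteSpace E]
    [NormedAddCommGroup F] [NormedSpace ℝ F]
    {f : E → F} {f' : E → E →L[ℝ] F} {μ L : ℝ} (hμ : 0 < μ) (hL : 0 < L)
    (hf : ∀ x, HasFDerivAt f (f' x) x) (hLip : ∀ x, ‖f' x - f' 0‖ ≤ L * ‖x‖)
    (hinv : ∀ y, ∃ x, f' 0 x = y ∧ ‖x‖ ≤ μ⁻¹ * ‖y‖) {y : F}
    (hy : ‖y - f 0‖ ≤ μ ^ 2 / (4 * L)) :
    ∃ x, f x = y ∧ ‖x‖ ≤ μ / (2 * L) := by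
  set ε := μ / (2 * L)
  have hε : 0 ≤ ε := by positivity
  have happrox : ApproximatesLinearOn f (f' 0) (closedBall (0 : E) ε)
      (⟨μ / 2, by positivity⟩ : NNReal) :=
    fun x hx x' hx' => (convex_closedBall (0 : E) ε).norm_image_sub_le_of_norm_hasFDerivWithin_le'
      (fun z _ => (hf z).hasFDerivWithinAt) (fun z hz => calc
        ‖f' z - f' 0‖ ≤ L * ‖z‖ := hLip z
        _ ≤ L * ε := by gcongr; simpa using hz
        _ = μ / 2 := by simp only [ε]; field_simp) hx' hx
  choose inv hinv_apply hinv_norm using hinv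
  let finv : (f' 0).NonlinearRightInverse := ⟨inv, ⟨μ⁻¹, by positivity⟩, hinv_norm, hinv_apply⟩
  have hy' : y ∈ closedBall (f 0) (((finv.nnnorm : ℝ)⁻¹ - μ / 2) * ε) := by
    rw [mem_closedBall, dist_eq_norm]
    have hfinv : (finv.nnnorm : ℝ) = μ⁻¹ := rfl
    convert hy using 1
    rw [hfinv, inv_inv]
    simp only [ε]
    field_simp
    ring
  obtain ⟨x, hx, rfl⟩ :=
    happrox.surjOn_closedBall_of_nonlinearRightInverse finv hε subset_rfl hy'
  exact ⟨x, rfl, by simpa using hx⟩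

theorem hasFDerivAt_half_inner_self_add_inner_zero {E : Type*} [NormedAddCommGroup E]
    [InnerProductSpace ℝ E] [FiniteDimensional ℝ E] (A : E →ₗ[ℝ] E) (b : E) :
    HasFDerivAt (fun x => 1 / 2 * ⟪A x, x⟫ + ⟪b, x⟫) (innerSL ℝ b) 0 := by
  have hquad : HasFDerivAt (fun x => ⟪A x, x⟫) (0 : E →L[ℝ] ℝ) 0 := by
    refine (A.toContinuousLinearMap.hasFDerivAt.inner ℝ (hasFDerivAt_id (0 : E))).congr_fderiv ?_
    ext v
    simp [fderivInnerCLM_apply]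
  refine ((hquad.const_mul (1 / 2 : ℝ)).add (innerSL ℝ b).hasFDerivAt).congr_fderiv ?_
  simp

theorem apply_eq_inner_of_hasFDerivAt_quadratic_zero {ι κ : Type*} [Fintype ι] [DecidableEq ι]
    [Fintype κ] (A : κ → Matrix ι ι ℝ) (b : κ → EuclideanSpace ℝ ι)
    {g : EuclideanSpace ℝ ι → EuclideanSpace ℝ κ}
    (hg : ∀ x i, g x i = 1 / 2 * ⟪Matrix.toEuclideanLin (A i) x, x⟫ + ⟪b i, x⟫)
    {φ : EuclideanSpace ℝ ι →L[ℝ] EuclideanSpace ℝ κ} (hφ : HasFDerivAt g φ 0)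
    (v : EuclideanSpace ℝ ι) (i : κ) : φ v i = ⟪b i, v⟫ := by
  have hgi : HasFDerivAt (fun x => g x i) (PiLp.proj 2 _ i ∘L φ) 0 :=
    ((PiLp.hasFDerivAt_apply 2 (g 0) i).comp 0 hφ :)
  simp only [hg] at hgi
  exact congr($(hgi.unique (hasFDerivAt_half_inner_self_add_inner_zero _ (b i))) v)

theorem Matrix.toEuclideanLin_transpose_apply {ι κ : Type*} [Fintype ι] [DecidableEq ι]
    [Fintype κ] [DecidableEq κ] (H : Matrix κ ι ℝ) (h : EuclideanSpace ℝ κ) :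
    H.transpose.toEuclideanLin h = adjoint H.toEuclideanLin.toContinuousLinearMap h := by
  rw [← conjTranspose_eq_transpose_of_trivial, toEuclideanLin_conjTranspose_eq_adjoint,
    ← LinearMap.adjoint_toContinuousLinearMap]
  rfl

theorem stmt10_general {n m : ℕ} (μ₀ L : ℝ) (hμ₀ : 0 < μ₀) (hL : 0 < L)
    (A : Fin m → Matrix (Fin n) (Fin n) ℝ)
    (b : Fin m → EuclideanSpace ℝ (Fin n))
    (g : EuclideanSpace ℝ (Fin n) → EuclideanSpace ℝ (Fin m))
    (hg : ∀ x i, g x i =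
      (1 / 2) * (inner ℝ (Matrix.toEuclideanLin (A i) x) x : ℝ) + (inner ℝ (b i) x : ℝ))
    (H : Matrix (Fin m) (Fin n) ℝ) (hH : ∀ i j, H i j = b i j)
    (hμ : ∀ h : EuclideanSpace ℝ (Fin m),
      μ₀ * ‖h‖ ≤ ‖Matrix.toEuclideanLin H.transpose h‖)
    (g' : EuclideanSpace ℝ (Fin n) →
      (EuclideanSpace ℝ (Fin n) →L[ℝ] EuclideanSpace ℝ (Fin m)))
    (hdiff : ∀ x, HasFDerivAt g (g' x) x)
    (hLip : ∀ x x', ‖g' x - g' x'‖ ≤ L * ‖x - x'‖)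
    (y : EuclideanSpace ℝ (Fin m)) (hy : ‖y‖ < μ₀ ^ 2 / (4 * L)) :
    ∃ x : EuclideanSpace ℝ (Fin n), g x = y ∧ ‖x‖ ≤ μ₀ / (2 * L) := by
  have hg0 : g 0 = 0 := by ext i; simp [hg]
  have hg'0 : g' 0 = (Matrix.toEuclideanLin H).toContinuousLinearMap := by
    ext v i
    rw [apply_eq_inner_of_hasFDerivAt_quadratic_zero A b hg (hdiff 0)]
    simp [Matrix.mulVec, dotProduct, hH, PiLp.inner_apply, mul_comm]
  have hinv := (g' 0).exists_preimage_norm_le_of_adjoint_bound hμ₀ fun h => by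
    simpa [hg'0, Matrix.toEuclideanLin_transpose_apply] using hμ h
  exact exists_norm_le_eq_of_lipschitz_fderiv hμ₀ hL hdiff (fun x => by simpa using hLip x 0)
    hinv (by simpa [hg0] using hy.le)

/-- solvability of quadratic equations `g x = y` for `‖y‖ < μ₀²/(4L)`. -/
theorem stmt10 {n m : ℕ} (μ₀ L : ℝ) (hμ₀ : 0 < μ₀) (hL : 0 < L)
    (A : Fin m → Matrix (Fin n) (Fin n) ℝ) (hA : ∀ i, (A i).IsSymm)
    (b : Fin m → EuclideanSpace ℝ (Fin n))
    (g : EuclideanSpace ℝ (Fin n) → EuclideanSpace ℝ (Fin m))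
    (hg : ∀ x i, g x i =
      (1 / 2) * (inner ℝ (Matrix.toEuclideanLin (A i) x) x : ℝ) + (inner ℝ (b i) x : ℝ))
    (H : Matrix (Fin m) (Fin n) ℝ) (hH : ∀ i j, H i j = b i j)
    (hμ : ∀ h : EuclideanSpace ℝ (Fin m),
      μ₀ * ‖h‖ ≤ ‖Matrix.toEuclideanLin H.transpose h‖)
    (g' : EuclideanSpace ℝ (Fin n) →
      (EuclideanSpace ℝ (Fin n) →L[ℝ] EuclideanSpace ℝ (Fin m)))
    (hdiff : ∀ x, HasFDerivAt g (g' x) x)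
    (hLip : ∀ x x', ‖g' x - g' x'‖ ≤ L * ‖x - x'‖)
    (y : EuclideanSpace ℝ (Fin m)) (hy : ‖y‖ < μ₀ ^ 2 / (4 * L)) :
    ∃ x : EuclideanSpace ℝ (Fin n), g x = y ∧ ‖x‖ ≤ μ₀ / (2 * L) :=
  stmt10_general μ₀ L hμ₀ hL A b g hg H hH hμ g' hdiff hLip y hy
end

section
/- Let φ : ℝ → ℝ be twice differentiable with |φ'(t)| ≥ μ_φ > 0 and |φ''(t)| ≤ M for all t ∈ ℝ, let c₁, …, c_m ∈ ℝⁿ and y ∈ ℝᵐ, and define P : ℝⁿ → ℝᵐ by P_i(x) = φ(⟨c_i, x⟩) − y_i. Let x ∈ ℝⁿ, let z ∈ ℝⁿ satisfy ⟨c_i, z⟩ = P_i(x)/φ'(⟨c_i, x⟩) for each i = 1, …, m (i.e. P'(x) z = P(x) by structure), and let 0 ≤ α ≤ 1. Then, with u = max_i |P_i(x)| the ℓ∞ norm of the residual, max_i |P_i(x − αz)| ≤ (1 − α)·u + (M/(2 μ_φ²))·α²·u²; i.e. the one-step recurrence u_{k+1} ≤ (1 − α)u_k + γ (α² u_k²)/2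 holds with γ = M/μ_φ², independently of the vectors c_i. -/
/-!
Coordinatewise, `P_i (x - α • z)` is `φ` evaluated one damped Newton step away from
`t = ⟪c_i, x⟫`, with Newton increment `s = ⟪c_i, z⟫`. The Newton relation `s * φ' t = P_i x`
turns the first-order Taylor expansion into `(1 - α) P_i x`, and the second-order remainder
is at most `M / 2 * α² s² ≤ M / 2 * α² ‖P x‖² / μ_φ²`.
-/

open Set

theorem norm_sub_sub_smul_le_of_norm_deriv2_le {E : Type*} [NormedAddCommGroup E]
    [NormedSpace ℝ E] {f f' f'' : ℝ → E} {M : ℝ} (hf : ∀ t, HasDerivAt f (f' t) t)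
    (hf' : ∀ t, HasDerivAt f' (f'' t) t) (hM : ∀ t, ‖f'' t‖ ≤ M) (a b : ℝ) :
    ‖f b - f a - (b - a) • f' a‖ ≤ M / 2 * (b - a) ^ 2 := by
  -- `f''` need not be continuous, so instead of Taylor's theorem we fence the remainder along
  -- the segment by the parabola `M / 2 * (b - a) ^ 2 * u ^ 2`.
  have hf'_lip : ∀ u, ‖f' u - f' a‖ ≤ M * ‖u - a‖ := fun u =>
    convex_univ.norm_image_sub_le_of_norm_hasDerivWithin_le
      (fun t _ => (hf' t).hasDerivWithinAt) (fun t _ => hM t) (mem_univ a) (mem_univ u)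
  set g : ℝ → E := fun u => f (a + u * (b - a)) - f a - (u * (b - a)) • f' a
  have hg : ∀ u, HasDerivAt g ((b - a) • (f' (a + u * (b - a)) - f' a)) u := by
    intro u
    have hline : HasDerivAt (fun u : ℝ => a + u * (b - a)) (b - a) u := by
      simpa using ((hasDerivAt_id u).mul_const (b - a)).const_add a
    have := (((hf _).scomp u hline).sub_const (f a)).sub
      (((hasDerivAt_id u).mul_const (b - a)).smul_const (f' a))
    exact this.congr_deriv (by rw [one_mul, smul_sub])
  have hB : ∀ u, HasDerivAt (fun u => M / 2 * (b - a) ^ 2 * u ^ 2) (M * (b - a) ^ 2 * u) u :=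
    fun u => ((hasDerivAt_pow 2 u).const_mul (M / 2 * (b - a) ^ 2)).congr_deriv (by ring)
  have hg'_le : ∀ u ∈ Ico (0 : ℝ) 1,
      ‖(b - a) • (f' (a + u * (b - a)) - f' a)‖ ≤ M * (b - a) ^ 2 * u := by
    rintro u ⟨hu, -⟩
    calc ‖(b - a) • (f' (a + u * (b - a)) - f' a)‖
        ≤ |b - a| * (M * ‖a + u * (b - a) - a‖) := by
          rw [norm_smul, Real.norm_eq_abs]
          exact mul_le_mul_of_nonneg_left (hf'_lip _) (abs_nonneg _)
      _ = M * (b - a) ^ 2 * u := by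
          rw [add_sub_cancel_left, Real.norm_eq_abs, abs_mul, abs_of_nonneg hu, ← sq_abs (b - a)]
          ring
  have := image_norm_le_of_norm_deriv_right_le_deriv_boundary
    (fun u _ => (hg u).continuousAt.continuousWithinAt) (fun u _ => (hg u).hasDerivWithinAt)
    (by simp [g]) hB hg'_le (right_mem_Icc.2 zero_le_one)
  simpa [g] using this

theorem abs_damped_newton_step_le {f f' f'' : ℝ → ℝ} {M : ℝ}
    (hf : ∀ t, HasDerivAt f (f' t) t) (hf' : ∀ t, HasDerivAt f' (f'' t) t)
    (hM : ∀ t, |f'' t| ≤ M) {t s v : ℝ} (hs : s * f' t = f t - v) (α : ℝ) :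
    |f (t - α * s) - v| ≤ |1 - α| * |f t - v| + M / 2 * α ^ 2 * s ^ 2 := by
  have hrem := norm_sub_sub_smul_le_of_norm_deriv2_le hf hf' hM t (t - α * s)
  simp only [Real.norm_eq_abs, smul_eq_mul] at hrem
  have hsplit : f (t - α * s) - v
      = (f (t - α * s) - f t - (t - α * s - t) * f' t) + (1 - α) * (f t - v) := by
    linear_combination (-α) * hs
  calc |f (t - α * s) - v|
      ≤ |f (t - α * s) - f t - (t - α * s - t) * f' t| + |(1 - α) * (f t - v)| := by
        rw [hsplit]; exact abs_add_le _ _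
    _ ≤ M / 2 * (t - α * s - t) ^ 2 + |1 - α| * |f t - v| := by
        rw [abs_mul]; exact add_le_add_left hrem _
    _ = |1 - α| * |f t - v| + M / 2 * α ^ 2 * s ^ 2 := by ring

theorem stmt18_general {n m : ℕ} (μφ M : ℝ) (hμφ : 0 < μφ)
    (φ φ' φ'' : ℝ → ℝ)
    (hd1 : ∀ t, HasDerivAt φ (φ' t) t)
    (hd2 : ∀ t, HasDerivAt φ' (φ'' t) t)
    (hlo : ∀ t, μφ ≤ |φ' t|) (hhi : ∀ t, |φ'' t| ≤ M)
    (c : Fin m → EuclideanSpace ℝ (Fin n)) (y : Fin m → ℝ)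
    (P : EuclideanSpace ℝ (Fin n) → Fin m → ℝ)
    (hP : ∀ x i, P x i = φ (inner ℝ (c i) x : ℝ) - y i)
    (x z : EuclideanSpace ℝ (Fin n))
    (hz : ∀ i, (inner ℝ (c i) z : ℝ) = P x i / φ' (inner ℝ (c i) x : ℝ))
    (α : ℝ) (hα1 : α ≤ 1) :
    ‖P (x - α • z)‖ ≤ (1 - α) * ‖P x‖ + M / (2 * μφ ^ 2) * α ^ 2 * ‖P x‖ ^ 2 := by
  have hM : 0 ≤ M := (abs_nonneg _).trans (hhi 0)
  have hα : 0 ≤ 1 - α := sub_nonneg.2 hα1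
  refine (pi_norm_le_iff_of_nonneg (by positivity)).2 fun i => ?_
  set t := (inner ℝ (c i) x : ℝ)
  set s := (inner ℝ (c i) z : ℝ)
  have hs : s = P x i / φ' t := hz i
  have hPi : |P x i| ≤ ‖P x‖ := norm_le_pi_norm (P x) i
  have hφ't : φ' t ≠ 0 := abs_pos.1 (hμφ.trans_le (hlo t))
  have hs_newton : s * φ' t = φ t - y i := by rw [hs, div_mul_cancel₀ _ hφ't, hP]
  have hs_le : |s| ≤ ‖P x‖ / μφ := by
    rw [hs, abs_div]; exact div_le_div₀ (norm_nonneg _) hPi hμφ (hlo t)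
  have hstep := abs_damped_newton_step_le hd1 hd2 hhi hs_newton α
  rw [← hP, abs_of_nonneg hα] at hstep
  rw [Real.norm_eq_abs, hP, inner_sub_right, real_inner_smul_right]
  calc |φ (t - α * s) - y i|
      ≤ (1 - α) * |P x i| + M / 2 * α ^ 2 * |s| ^ 2 := by rwa [sq_abs]
    _ ≤ (1 - α) * ‖P x‖ + M / 2 * α ^ 2 * (‖P x‖ / μφ) ^ 2 := by gcongr
    _ = (1 - α) * ‖P x‖ + M / (2 * μφ ^ 2) * α ^ 2 * ‖P x‖ ^ 2 := by field_simp

/-- structured problems `P_i(x) = φ(⟨c_i,x⟩) − y_i`: the one-step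
recurrence for the ℓ∞ residual holds with `γ = M/μ_φ²`, independently of the `c_i`.
Here `Fin m → ℝ` carries the sup (ℓ∞) norm. -/
theorem stmt18 {n m : ℕ} (μφ M : ℝ) (hμφ : 0 < μφ) (hM : 0 < M)
    (φ φ' φ'' : ℝ → ℝ)
    (hd1 : ∀ t, HasDerivAt φ (φ' t) t)
    (hd2 : ∀ t, HasDerivAt φ' (φ'' t) t)
    (hlo : ∀ t, μφ ≤ |φ' t|) (hhi : ∀ t, |φ'' t| ≤ M)
    (c : Fin m → EuclideanSpace ℝ (Fin n)) (y : Fin m → ℝ)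
    (P : EuclideanSpace ℝ (Fin n) → Fin m → ℝ)
    (hP : ∀ x i, P x i = φ (inner ℝ (c i) x : ℝ) - y i)
    (x z : EuclideanSpace ℝ (Fin n))
    (hz : ∀ i, (inner ℝ (c i) z : ℝ) = P x i / φ' (inner ℝ (c i) x : ℝ))
    (α : ℝ) (hα0 : 0 ≤ α) (hα1 : α ≤ 1) :
    ‖P (x - α • z)‖ ≤ (1 - α) * ‖P x‖ + M / (2 * μφ ^ 2) * α ^ 2 * ‖P x‖ ^ 2 :=
  stmt18_general μφ M hμφ φ φ' φ'' hd1 hd2 hlo hhi c y P hP x z hz α hα1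
end

section
/- Let A be a real m×n matrix of rank m and let b ∈ ℝᵐ with b ≠ 0. Then the minimum in the primal problem min{‖z‖₁ : A z = b} and the minimum in the dual problem min{‖Aᵀh‖_∞ : ⟨b, h⟩ = 1} are both attained and positive, and their values p and d satisfy p·d = 1, i.e. min{‖z‖₁ : Az = b} = 1 / min{‖Aᵀh‖_∞ : ⟨b, h⟩ = 1}. -/
/-!
The least ℓ¹ norm `minL1 A y` of a solution of `A z = y` is attained (the ℓ¹ norm is coercive)
and, since `A` is onto, is a sublinear functional of `y`. Hahn–Banach yields a linear functional
`g ≤ minL1 A` with `g b = minL1 A b`; writing `g = ⟨·, h⟩`, the bound `g (A eⱼ) ≤ ‖eⱼ‖₁ = 1`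
(and the same for `-eⱼ`) says `‖Aᵀ h‖_∞ ≤ 1`, so `h / minL1 A b` is dual feasible with value
`1 / minL1 A b`. Weak duality `1 = ⟨b, h⟩ = ⟨Aᵀ h, z⟩ ≤ ‖Aᵀ h‖_∞ ‖z‖₁` shows it is optimal.
-/

open Matrix

section L1Norm

variable {ι : Type*} [Fintype ι]

def l1Norm (z : ι → ℝ) : ℝ := ∑ j, |z j|

lemma l1Norm_nonneg (z : ι → ℝ) : 0 ≤ l1Norm z := by
  unfold l1Norm; positivity

lemma l1Norm_eq_zero {z : ι → ℝ} : l1Norm z = 0 ↔ z = 0 := by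
  simp [l1Norm, Finset.sum_eq_zero_iff_of_nonneg, funext_iff]

lemma l1Norm_add_le (z w : ι → ℝ) : l1Norm (z + w) ≤ l1Norm z + l1Norm w := by
  simp only [l1Norm, ← Finset.sum_add_distrib]
  exact Finset.sum_le_sum fun j _ => abs_add_le _ _

lemma l1Norm_smul (c : ℝ) (z : ι → ℝ) : l1Norm (c • z) = |c| * l1Norm z := by
  simp [l1Norm, Finset.mul_sum, abs_mul]

lemma l1Norm_single [DecidableEq ι] (j : ι) (c : ℝ) : l1Norm (Pi.single j c) = |c| := by
  rw [l1Norm, Finset.sum_eq_single j] <;> simp_all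

lemma continuous_l1Norm : Continuous (l1Norm : (ι → ℝ) → ℝ) := by
  unfold l1Norm; fun_prop

lemma norm_le_l1Norm (z : ι → ℝ) : ‖z‖ ≤ l1Norm z :=
  (pi_norm_le_iff_of_nonneg (l1Norm_nonneg z)).2 fun j =>
    Finset.single_le_sum (f := fun j => |z j|) (fun j _ => abs_nonneg (z j)) (Finset.mem_univ j)

lemma dotProduct_le_norm_mul_l1Norm (v z : ι → ℝ) : v ⬝ᵥ z ≤ ‖v‖ * l1Norm z := by
  rw [dotProduct, l1Norm, Finset.mul_sum]
  refine Finset.sum_le_sum fun j _ => ?_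
  calc v j * z j ≤ |v j| * |z j| := by rw [← abs_mul]; exact le_abs_self _
    _ ≤ ‖v‖ * |z j| := by gcongr; exact norm_le_pi_norm v j

lemma norm_le_one_of_forall_dotProduct_le_l1Norm [DecidableEq ι] {v : ι → ℝ}
    (hv : ∀ z, v ⬝ᵥ z ≤ l1Norm z) : ‖v‖ ≤ 1 := by
  refine (pi_norm_le_iff_of_nonneg zero_le_one).2 fun j => abs_le.2 ⟨?_, ?_⟩
  · simpa [dotProduct_single, l1Norm_single, neg_le] using hv (Pi.single j (-1))
  · simpa [dotProduct_single, l1Norm_single] using hv (Pi.single j 1)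

theorem IsClosed.exists_isMinOn_l1Norm {s : Set (ι → ℝ)} (hs : IsClosed s) (hne : s.Nonempty) :
    ∃ z ∈ s, IsMinOn l1Norm s z := by
  obtain ⟨z₀, hz₀⟩ := hne
  refine continuous_l1Norm.continuousOn.exists_isMinOn' hs hz₀ ?_
  have hcoercive := (tendsto_norm_cocompact_atTop (E := ι → ℝ)).eventually_ge_atTop (l1Norm z₀)
  exact (hcoercive.mono fun z hz => hz.trans (norm_le_l1Norm z)).filter_mono inf_le_left

end L1Norm

section MinL1

variable {κ ι : Type*} [Fintype ι] (A : Matrix κ ι ℝ)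

/-- When `A *ᵥ ·` is onto, this is the quotient of the ℓ¹ norm by `ker A`. -/
noncomputable def minL1 (y : κ → ℝ) : ℝ :=
  sInf {r | ∃ z, A *ᵥ z = y ∧ r = l1Norm z}

variable {A}

lemma isLeast_minL1 {y : κ → ℝ} (hy : y ∈ Set.range A.mulVec) :
    IsLeast {r | ∃ z, A *ᵥ z = y ∧ r = l1Norm z} (minL1 A y) := by
  have hclosed : IsClosed {z | A *ᵥ z = y} :=
    isClosed_eq (continuous_const.matrix_mulVec continuous_id) continuous_const
  obtain ⟨z₀, hz₀, hmin⟩ := hclosed.exists_isMinOn_l1Norm hy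
  have hleast : IsLeast {r | ∃ z, A *ᵥ z = y ∧ r = l1Norm z} (l1Norm z₀) :=
    ⟨⟨z₀, hz₀, rfl⟩, by rintro _ ⟨z, hz, rfl⟩; exact hmin hz⟩
  rwa [minL1, hleast.csInf_eq]

lemma minL1_le {y : κ → ℝ} {z : ι → ℝ} (hz : A *ᵥ z = y) : minL1 A y ≤ l1Norm z :=
  csInf_le ⟨0, by rintro _ ⟨z, -, rfl⟩; exact l1Norm_nonneg z⟩ ⟨z, hz, rfl⟩

lemma minL1_nonneg (y : κ → ℝ) : 0 ≤ minL1 A y :=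
  Real.sInf_nonneg <| by rintro _ ⟨z, -, rfl⟩; exact l1Norm_nonneg z

lemma minL1_pos {y : κ → ℝ} (hy : y ∈ Set.range A.mulVec) (hy₀ : y ≠ 0) : 0 < minL1 A y := by
  obtain ⟨z, hz, hzy⟩ := (isLeast_minL1 hy).1
  refine (minL1_nonneg y).lt_of_ne fun h => hy₀ ?_
  rw [← hz, l1Norm_eq_zero.1 (h.trans hzy).symm, mulVec_zero]

variable (hA : Function.Surjective A.mulVec)
include hA

lemma minL1_add_le (y₁ y₂ : κ → ℝ) : minL1 A (y₁ + y₂) ≤ minL1 A y₁ + minL1 A y₂ := by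
  obtain ⟨z₁, hz₁, h₁⟩ := (isLeast_minL1 (hA y₁)).1
  obtain ⟨z₂, hz₂, h₂⟩ := (isLeast_minL1 (hA y₂)).1
  calc minL1 A (y₁ + y₂) ≤ l1Norm (z₁ + z₂) := minL1_le (by rw [mulVec_add, hz₁, hz₂])
    _ ≤ minL1 A y₁ + minL1 A y₂ := h₁ ▸ h₂ ▸ l1Norm_add_le z₁ z₂

lemma minL1_smul_le (c : ℝ) (y : κ → ℝ) : minL1 A (c • y) ≤ |c| * minL1 A y := by
  obtain ⟨z, hz, hzy⟩ := (isLeast_minL1 (hA y)).1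
  calc minL1 A (c • y) ≤ l1Norm (c • z) := minL1_le (by rw [mulVec_smul, hz])
    _ = |c| * minL1 A y := by rw [l1Norm_smul, hzy]

lemma minL1_smul (c : ℝ) (y : κ → ℝ) : minL1 A (c • y) = |c| * minL1 A y := by
  refine (minL1_smul_le hA c y).antisymm ?_
  rcases eq_or_ne c 0 with rfl | hc
  · simpa using minL1_nonneg (A := A) 0
  calc |c| * minL1 A y = |c| * minL1 A (c⁻¹ • c • y) := by rw [inv_smul_smul₀ hc]
    _ ≤ |c| * (|c⁻¹| * minL1 A (c • y)) := by gcongr; exact minL1_smul_le hA _ _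
    _ = minL1 A (c • y) := by rw [abs_inv, mul_inv_cancel_left₀ (abs_ne_zero.2 hc)]

lemma exists_linearMap_le_minL1 {y : κ → ℝ} (hy : y ≠ 0) :
    ∃ g : (κ → ℝ) →ₗ[ℝ] ℝ, g y = minL1 A y ∧ ∀ v, g v ≤ minL1 A v := by
  let f : (κ → ℝ) →ₗ.[ℝ] ℝ := LinearPMap.mkSpanSingleton y (minL1 A y) hy
  have hf : ∀ x : f.domain, f x ≤ minL1 A x := by
    rintro ⟨_, hx⟩
    obtain ⟨c, rfl⟩ := Submodule.mem_span_singleton.1 hx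
    simp only [f, LinearPMap.mkSpanSingleton'_apply, smul_eq_mul, minL1_smul hA]
    gcongr
    · exact minL1_nonneg y
    · exact le_abs_self c
  obtain ⟨g, hgf, hg⟩ := exists_extension_of_le_sublinear f (minL1 A)
    (fun c hc v => by rw [minL1_smul hA, abs_of_pos hc]) (minL1_add_le hA) hf
  refine ⟨g, ?_, hg⟩
  exact (hgf ⟨y, Submodule.mem_span_singleton_self y⟩).trans (LinearPMap.mkSpanSingleton_apply ..)

end MinL1

section Duality

variable {κ ι : Type*} [Fintype κ] [Fintype ι] {A : Matrix κ ι ℝ}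

lemma transpose_mulVec_dotProduct (A : Matrix κ ι ℝ) (h : κ → ℝ) (z : ι → ℝ) :
    (Aᵀ *ᵥ h) ⬝ᵥ z = h ⬝ᵥ (A *ᵥ z) := by
  rw [mulVec_transpose, dotProduct_mulVec]

lemma one_le_l1Norm_mul_norm_transpose_mulVec {b h : κ → ℝ} {z : ι → ℝ} (hz : A *ᵥ z = b)
    (hh : b ⬝ᵥ h = 1) : 1 ≤ l1Norm z * ‖Aᵀ *ᵥ h‖ :=
  calc 1 = (Aᵀ *ᵥ h) ⬝ᵥ z := by rw [transpose_mulVec_dotProduct, hz, dotProduct_comm, hh]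
    _ ≤ l1Norm z * ‖Aᵀ *ᵥ h‖ := by rw [mul_comm]; exact dotProduct_le_norm_mul_l1Norm _ _

lemma exists_dotProduct_eq_minL1_norm_transpose_mulVec_le_one [DecidableEq κ] [DecidableEq ι]
    (hA : Function.Surjective A.mulVec) {y : κ → ℝ} (hy : y ≠ 0) :
    ∃ h : κ → ℝ, y ⬝ᵥ h = minL1 A y ∧ ‖Aᵀ *ᵥ h‖ ≤ 1 := by
  obtain ⟨g, hgy, hg⟩ := exists_linearMap_le_minL1 hA hy
  let h := (dotProductEquiv ℝ κ).symm g
  have hgh : ∀ v, g v = h ⬝ᵥ v := fun v => by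
    rw [← (dotProductEquiv ℝ κ).apply_symm_apply g]; rfl
  refine ⟨h, by rw [dotProduct_comm, ← hgh, hgy], ?_⟩
  refine norm_le_one_of_forall_dotProduct_le_l1Norm fun z => ?_
  calc (Aᵀ *ᵥ h) ⬝ᵥ z = g (A *ᵥ z) := by rw [transpose_mulVec_dotProduct, hgh]
    _ ≤ minL1 A (A *ᵥ z) := hg _
    _ ≤ l1Norm z := minL1_le rfl

lemma isLeast_inv_minL1 [DecidableEq κ] [DecidableEq ι] (hA : Function.Surjective A.mulVec)
    {b : κ → ℝ} (hb : b ≠ 0) :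
    IsLeast {r | ∃ h, b ⬝ᵥ h = 1 ∧ r = ‖Aᵀ *ᵥ h‖} (minL1 A b)⁻¹ := by
  have hp := minL1_pos (hA b) hb
  obtain ⟨z, hz, hzb⟩ := (isLeast_minL1 (hA b)).1
  have hlower : ∀ h, b ⬝ᵥ h = 1 → (minL1 A b)⁻¹ ≤ ‖Aᵀ *ᵥ h‖ := fun h hh => by
    rw [inv_le_iff_one_le_mul₀' hp, hzb]
    exact one_le_l1Norm_mul_norm_transpose_mulVec hz hh
  obtain ⟨h₀, hh₀b, hh₀⟩ := exists_dotProduct_eq_minL1_norm_transpose_mulVec_le_one hA hb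
  have hfeasible : b ⬝ᵥ (minL1 A b)⁻¹ • h₀ = 1 := by
    rw [dotProduct_smul, hh₀b, smul_eq_mul, inv_mul_cancel₀ hp.ne']
  refine ⟨⟨_, hfeasible, ((hlower _ hfeasible).antisymm' ?_).symm⟩, fun r ⟨h, hh, hr⟩ => hr ▸ hlower h hh⟩
  rw [mulVec_smul, norm_smul, Real.norm_of_nonneg (inv_nonneg.2 hp.le)]
  exact mul_le_of_le_one_right (inv_nonneg.2 hp.le) hh₀

end Duality

lemma Matrix.mulVec_surjective_of_rank_eq_card {κ ι R : Type*} [Fintype κ] [Fintype ι] [Field R]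
    {A : Matrix κ ι R} (hA : A.rank = Fintype.card κ) : Function.Surjective A.mulVec := by
  have : LinearMap.range A.mulVecLin = ⊤ :=
    Submodule.eq_top_of_finrank_eq (by rw [← Matrix.rank, hA, Module.finrank_fintype_fun_eq_card])
  exact LinearMap.range_eq_top.1 this

/-- LP duality for the minimum-ℓ₁-norm solution of `Az = b`:
both the primal and the dual minima are attained and positive, and their product is 1.
Here `Fin n → ℝ` carries the sup (ℓ∞) norm, so `‖A.transpose.mulVec h‖` is the ℓ∞ norm. -/
theorem stmt19 {m n : ℕ} (A : Matrix (Fin m) (Fin n) ℝ) (hrank : A.rank = m)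
    (b : Fin m → ℝ) (hb : b ≠ 0) :
    ∃ p d : ℝ,
      IsLeast {r : ℝ | ∃ z : Fin n → ℝ, A.mulVec z = b ∧ r = ∑ j, |z j|} p ∧
      IsLeast {r : ℝ | ∃ h : Fin m → ℝ, (∑ i, b i * h i) = 1 ∧ r = ‖A.transpose.mulVec h‖} d ∧
      0 < p ∧ 0 < d ∧ p * d = 1 := by
  have hA : Function.Surjective A.mulVec :=
    Matrix.mulVec_surjective_of_rank_eq_card (by rw [hrank, Fintype.card_fin])
  have hp : 0 < minL1 A b := minL1_pos (hA b) hb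
  exact ⟨minL1 A b, (minL1 A b)⁻¹, isLeast_minL1 (hA b), isLeast_inv_minL1 hA hb, hp,
    inv_pos.2 hp, mul_inv_cancel₀ hp.ne'⟩
end
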